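/- arXiv:2303.04128 — 6 statements merged into one kernel-verified Lean document; each statement's English description precedes it below -/
import Mathlib

section
/- Let S be a finite-dimensional subspace of H. Then m_S equals the convex hull of { |v|² : v ∈ S, ‖v‖ = 1 }, where |v|² denotes the sequence (|⟨v, e_i⟩|²)_{i∈ℕ}. -/
open scoped InnerProductSpace
open ContinuousLinearMap

noncomputable section

variable {H : Type*} [NormedAddCommGroup H] [InnerProductSpace ℂ H] [CompleteSpace H]

/-- The orthogonal projection onto `S`, as an operator `H →L[ℂ] H`. -/
def projOp (S : Submodule ℂ H) [S.HasOrthogonalProjection] : H →L[ℂ] H :=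
  S.subtypeL ∘L S.orthogonalProjectionOnto

/-- The diagonal of `T` with respect to the fixed orthonormal basis `e`. -/
def diagSeq (e : HilbertBasis ℕ ℂ H) (T : H →L[ℂ] H) : ℕ → ℝ :=
  fun i => (⟪T (e i), e i⟫_ℂ).re

/-- The (diagonal) trace of `T` with respect to the fixed orthonormal basis `e`. -/
def diagTr (e : HilbertBasis ℕ ℂ H) (T : H →L[ℂ] H) : ℝ :=
  ∑' i, (⟪T (e i), e i⟫_ℂ).re

/-- `ρ` is a density operator: a positive trace-class operator with trace one.
(For positive operators, being trace class is equivalent to being compact with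
summable diagonal in an orthonormal basis.) -/
def IsDensity (e : HilbertBasis ℕ ℂ H) (ρ : H →L[ℂ] H) : Prop :=
  IsCompactOperator ρ ∧ ρ.IsPositive ∧
    Summable (fun i => (⟪ρ (e i), e i⟫_ℂ).re) ∧ diagTr e ρ = 1

/-- `D_S`: the density operators supported in `S`, i.e. with `P_S Y = Y`. -/
def DOps (e : HilbertBasis ℕ ℂ H) (S : Submodule ℂ H) [S.HasOrthogonalProjection] :
    Set (H →L[ℂ] H) :=
  {Y | IsDensity e Y ∧ projOp S ∘L Y = Y}

/-- The moment set `m_S = Diag(D_S)`. -/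
def momentSet (e : HilbertBasis ℕ ℂ H) (S : Submodule ℂ H) [S.HasOrthogonalProjection] :
    Set (ℕ → ℝ) := diagSeq e '' DOps e S

/-- `|v|² = (|⟨v,e_i⟩|²)_i`. -/
def absSq (e : HilbertBasis ℕ ℂ H) (v : H) : ℕ → ℝ := fun i => ‖⟪e i, v⟫_ℂ‖ ^ 2

/-- `E_j = e_j ⊗ e_j`, the rank-one orthogonal projection onto `span{e_j}`. -/
def Eproj (e : HilbertBasis ℕ ℂ H) (j : ℕ) : H →L[ℂ] H :=
  (innerSL ℂ (e j)).smulRight (e j)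

/-- The joint numerical range of a sequence of operators. -/
def jnr (e : HilbertBasis ℕ ℂ H) (A : ℕ → (H →L[ℂ] H)) : Set (ℕ → ℝ) :=
  {w | ∃ ρ : H →L[ℂ] H, IsDensity e ρ ∧ ∀ j, w j = diagTr e (ρ ∘L A j)}

/-- The family `A_{S,E} = (P_S E_j P_S)_j`. -/
def ASE (e : HilbertBasis ℕ ℂ H) (S : Submodule ℂ H) [S.HasOrthogonalProjection] :
    ℕ → (H →L[ℂ] H) := fun j => projOp S ∘L Eproj e j ∘L projOp S

set_option linter.unusedSectionVars false

section Aux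

/-- rank one operator -/
def rk1 (v : H) : H →L[ℂ] H := (innerSL ℂ v).smulRight v

lemma rk1_apply (v x : H) : rk1 v x = ⟪v, x⟫_ℂ • v := rfl

lemma rk1_compact (v : H) : IsCompactOperator (rk1 v) := by
  have hg : IsCompactOperator (ContinuousLinearMap.toSpanSingleton ℂ v) := by
    refine ⟨(ContinuousLinearMap.toSpanSingleton ℂ v) '' Metric.closedBall 0 1, ?_, ?_⟩
    · exact ((isCompact_closedBall 0 1).image
        (ContinuousLinearMap.toSpanSingleton ℂ v).continuous)
    · exact Filter.mem_of_superset (Metric.closedBall_mem_nhds 0 one_pos)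
        (fun c hc => Set.mem_image_of_mem _ hc)
  rw [show rk1 v = (ContinuousLinearMap.toSpanSingleton ℂ v).comp (innerSL ℂ v) from rfl]
  exact hg.comp_clm _

lemma absSq_hasSum (e : HilbertBasis ℕ ℂ H) (v : H) :
    HasSum (fun i => ‖⟪e i, v⟫_ℂ‖ ^ 2) (‖v‖ ^ 2) := by
  have h := e.hasSum_inner_mul_inner v v
  have h2 : ∀ i, ⟪v, e i⟫_ℂ * ⟪e i, v⟫_ℂ = ((‖⟪e i, v⟫_ℂ‖ ^ 2 : ℝ) : ℂ) := by
    intro i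
    rw [mul_comm, ← inner_conj_symm v (e i), RCLike.mul_conj]
    norm_cast
  simp_rw [h2] at h
  have h3 := h.mapL Complex.reCLM
  have h4 : (Complex.reCLM ⟪v, v⟫_ℂ) = ‖v‖ ^ 2 := by
    simpa using inner_self_eq_norm_sq (𝕜 := ℂ) v
  rw [h4] at h3
  have h5 : (fun i => Complex.reCLM ((‖⟪e i, v⟫_ℂ‖ ^ 2 : ℝ) : ℂ))
      = fun i => ‖⟪e i, v⟫_ℂ‖ ^ 2 := by
    funext i
    rw [Complex.reCLM_apply, Complex.ofReal_re]
  rw [h5] at h3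
  exact h3

section Mix

variable (e : HilbertBasis ℕ ℂ H) {ι : Type*} (t : Finset ι) (w : ι → ℝ) (v : ι → H)
  (Y : H →L[ℂ] H)

lemma mix_inner (hrep : ∀ x, Y x = ∑ k ∈ t, (w k : ℂ) • (⟪v k, x⟫_ℂ • v k)) (x y : H) :
    ⟪Y x, y⟫_ℂ = ∑ k ∈ t, (w k : ℂ) * (⟪x, v k⟫_ℂ * ⟪v k, y⟫_ℂ) := by
  rw [hrep, sum_inner]
  refine Finset.sum_congr rfl fun k _ => ?_
  rw [inner_smul_left, inner_smul_left, Complex.conj_ofReal, inner_conj_symm]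

lemma mix_re_self (hrep : ∀ x, Y x = ∑ k ∈ t, (w k : ℂ) • (⟪v k, x⟫_ℂ • v k)) (x : H) :
    (⟪Y x, x⟫_ℂ).re = ∑ k ∈ t, w k * ‖⟪v k, x⟫_ℂ‖ ^ 2 := by
  rw [mix_inner t w v Y hrep x x, Complex.re_sum]
  refine Finset.sum_congr rfl fun k _ => ?_
  rw [← inner_conj_symm x (v k), RCLike.conj_mul]
  simp [← Complex.ofReal_pow, ← Complex.ofReal_mul]

lemma mix_diag (hrep : ∀ x, Y x = ∑ k ∈ t, (w k : ℂ) • (⟪v k, x⟫_ℂ • v k)) (i : ℕ) :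
    (⟪Y (e i), e i⟫_ℂ).re = ∑ k ∈ t, w k * ‖⟪e i, v k⟫_ℂ‖ ^ 2 := by
  rw [mix_re_self t w v Y hrep (e i)]
  refine Finset.sum_congr rfl fun k _ => ?_
  rw [norm_inner_symm]

lemma mix_hasSum (hrep : ∀ x, Y x = ∑ k ∈ t, (w k : ℂ) • (⟪v k, x⟫_ℂ • v k)) :
    HasSum (fun i => (⟪Y (e i), e i⟫_ℂ).re) (∑ k ∈ t, w k * ‖v k‖ ^ 2) := by
  have h : ∀ k ∈ t, HasSum (fun i => w k * ‖⟪e i, v k⟫_ℂ‖ ^ 2) (w k * ‖v k‖ ^ 2) :=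
    fun k _ => (absSq_hasSum e (v k)).mul_left _
  have h2 := hasSum_sum h
  simpa only [← mix_diag e t w v Y hrep] using h2

lemma mix_symm (hrep : ∀ x, Y x = ∑ k ∈ t, (w k : ℂ) • (⟪v k, x⟫_ℂ • v k)) :
    (Y : H →ₗ[ℂ] H).IsSymmetric := by
  intro x y
  simp only [ContinuousLinearMap.coe_coe]
  rw [mix_inner t w v Y hrep x y, hrep y, inner_sum]
  refine Finset.sum_congr rfl fun k _ => ?_
  rw [inner_smul_right, inner_smul_right]
  ring

lemma mix_positive (hw : ∀ k ∈ t, 0 ≤ w k)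
    (hrep : ∀ x, Y x = ∑ k ∈ t, (w k : ℂ) • (⟪v k, x⟫_ℂ • v k)) :
    Y.IsPositive := by
  refine ⟨mix_symm t w v Y hrep, fun x => ?_⟩
  rw [ContinuousLinearMap.reApplyInnerSelf_apply, RCLike.re_to_complex,
    mix_re_self t w v Y hrep x]
  exact Finset.sum_nonneg fun k hk =>
    mul_nonneg (hw k hk) (sq_nonneg _)

end Mix


lemma projOp_apply_mem (S : Submodule ℂ H) [S.HasOrthogonalProjection] (x : H) :
    projOp S x ∈ S := (S.orthogonalProjectionOnto x).2

lemma projOp_apply_of_mem (S : Submodule ℂ H) [S.HasOrthogonalProjection] {x : H}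
    (hx : x ∈ S) : projOp S x = x := by
  show ((S.orthogonalProjectionOnto x : S) : H) = x
  exact Submodule.starProjection_eq_self_iff.mpr hx

lemma mix_compact {ι : Type*} (t : Finset ι) (c : ι → ℂ) (v : ι → H) :
    IsCompactOperator (⇑(∑ k ∈ t, c k • rk1 (v k)) : H → H) := by
  have h : IsCompactOperator (∑ k ∈ t, ⇑(c k • rk1 (v k)) : H → H) :=
    Finset.sum_induction _ IsCompactOperator (fun a b ha hb => ha.add hb)
      isCompactOperator_zero (fun k _ => by
        rw [ContinuousLinearMap.coe_smul']
        exact (rk1_compact (v k)).smul (c k))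
  rwa [← ContinuousLinearMap.coe_sum'] at h

lemma mix_mem_DOps (e : HilbertBasis ℕ ℂ H) (S : Submodule ℂ H) [S.HasOrthogonalProjection]
    {ι : Type*} (t : Finset ι) (w : ι → ℝ) (v : ι → H)
    (hw : ∀ k ∈ t, 0 ≤ w k) (hw1 : ∑ k ∈ t, w k = 1)
    (hvS : ∀ k ∈ t, v k ∈ S) (hv1 : ∀ k ∈ t, ‖v k‖ = 1) :
    (∑ k ∈ t, (w k : ℂ) • rk1 (v k)) ∈ DOps e S ∧
      diagSeq e (∑ k ∈ t, (w k : ℂ) • rk1 (v k)) = ∑ k ∈ t, w k • absSq e (v k) := by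
  set Y : H →L[ℂ] H := ∑ k ∈ t, (w k : ℂ) • rk1 (v k) with hY
  have hrep : ∀ x, Y x = ∑ k ∈ t, (w k : ℂ) • (⟪v k, x⟫_ℂ • v k) := by
    intro x
    rw [hY]
    simp [ContinuousLinearMap.sum_apply, rk1_apply]
  have hsum : HasSum (fun i => (⟪Y (e i), e i⟫_ℂ).re) 1 := by
    have h := mix_hasSum e t w v Y hrep
    have h2 : ∑ k ∈ t, w k * ‖v k‖ ^ 2 = 1 := by
      rw [← hw1]
      exact Finset.sum_congr rfl fun k hk => by rw [hv1 k hk]; ring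
    rwa [h2] at h
  refine ⟨⟨⟨mix_compact t _ v, mix_positive t w v Y hw hrep, hsum.summable, hsum.tsum_eq⟩,
      ?_⟩, ?_⟩
  · ext x
    simp only [ContinuousLinearMap.comp_apply]
    rw [hrep x, map_sum]
    refine Finset.sum_congr rfl fun k hk => ?_
    rw [map_smul, map_smul, projOp_apply_of_mem S (hvS k hk)]
  · funext i
    simp only [diagSeq, Finset.sum_apply, Pi.smul_apply, smul_eq_mul, absSq]
    exact mix_diag e t w v Y hrep i

end Aux

/-- for a finite-dimensional subspace `S`,
`m_S = conv { |v|² : v ∈ S, ‖v‖ = 1 }`. -/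
theorem stmt_1 (e : HilbertBasis ℕ ℂ H) (S : Submodule ℂ H) [FiniteDimensional ℂ S] :
    momentSet e S =
      convexHull ℝ {x : ℕ → ℝ | ∃ v : H, v ∈ S ∧ ‖v‖ = 1 ∧ x = absSq e v} := by
  apply Set.Subset.antisymm
  · -- momentSet ⊆ convexHull
    rintro x ⟨Y, ⟨⟨hcpt, hpos, hsumm, htr⟩, hproj⟩, rfl⟩
    have hYmem : ∀ y : H, Y y ∈ S := by
      intro y
      have h := congrArg (fun T : H →L[ℂ] H => T y) hproj
      simp only [ContinuousLinearMap.comp_apply] at h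
      rw [← h]
      exact projOp_apply_mem S (Y y)
    have hsymm : ∀ a b : H, ⟪Y a, b⟫_ℂ = ⟪a, Y b⟫_ℂ := fun a b =>
      hpos.isSelfAdjoint.isSymmetric a b
    have hker : ∀ y ∈ Sᗮ, Y y = 0 := by
      intro y hy
      have h0 : ⟪Y y, Y y⟫_ℂ = 0 := by
        rw [hsymm]
        exact Submodule.inner_left_of_mem_orthogonal (hYmem (Y y)) hy
      exact inner_self_eq_zero.mp h0
    set n := Module.finrank ℂ S with hn
    set T : S →ₗ[ℂ] S :=
      LinearMap.codRestrict S ((Y : H →ₗ[ℂ] H) ∘ₗ S.subtype) (fun s => hYmem s) with hTdef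
    have hT : T.IsSymmetric := by
      intro a b
      have h := hsymm (a : H) (b : H)
      exact h
    set b : OrthonormalBasis (Fin n) ℂ S := hT.eigenvectorBasis rfl with hb
    set μ : Fin n → ℝ := hT.eigenvalues rfl with hμdef
    set v : Fin n → H := fun k => (b k : H) with hv
    have hvS : ∀ k, v k ∈ S := fun k => (b k).2
    have hnorm : ∀ k, ‖v k‖ = 1 := fun k => by
      rw [hv]
      rw [show ‖((b k : S) : H)‖ = ‖b k‖ from rfl]
      exact b.orthonormal.1 k
    have heig : ∀ k, Y (v k) = (μ k : ℂ) • v k := by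
      intro k
      have h := hT.apply_eigenvectorBasis rfl k
      have h2 := congrArg (Subtype.val) h
      rw [← hb] at h2
      exact h2
    have hrep : ∀ x : H, Y x = ∑ k : Fin n, (μ k : ℂ) • (⟪v k, x⟫_ℂ • v k) := by
      intro x
      have hdiff : x - (S.orthogonalProjectionOnto x : H) ∈ Sᗮ :=
        Submodule.sub_starProjection_mem_orthogonal x
      have hx1 : Y x = Y (S.orthogonalProjectionOnto x : H) := by
        have h := hker _ hdiff
        rw [map_sub, sub_eq_zero] at h
        exact h
      have hip : ∀ k, ⟪v k, (S.orthogonalProjectionOnto x : H)⟫_ℂ = ⟪v k, x⟫_ℂ := by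
        intro k
        have h0 : ⟪v k, x - (S.orthogonalProjectionOnto x : H)⟫_ℂ = 0 :=
          Submodule.inner_right_of_mem_orthogonal (hvS k) hdiff
        rw [inner_sub_right, sub_eq_zero] at h0
        exact h0.symm
      have hexp : (S.orthogonalProjectionOnto x : H) = ∑ k : Fin n, ⟪v k, x⟫_ℂ • v k := by
        have h1 := b.sum_repr (S.orthogonalProjectionOnto x)
        have h2 := congrArg (Subtype.val) h1
        push_cast at h2
        rw [← h2]
        refine Finset.sum_congr rfl fun k _ => ?_
        rw [b.repr_apply_apply]
        rw [show ⟪b k, S.orthogonalProjectionOnto x⟫_ℂ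
            = ⟪v k, (S.orthogonalProjectionOnto x : H)⟫_ℂ from rfl]
        rw [hip k]
      rw [hx1, hexp, map_sum]
      refine Finset.sum_congr rfl fun k _ => ?_
      rw [map_smul, heig k, smul_comm]
    have hμ : ∀ k, 0 ≤ μ k := by
      intro k
      have h := hpos.2 (v k)
      rw [ContinuousLinearMap.reApplyInnerSelf_apply, RCLike.re_to_complex] at h
      have h2 : ⟪Y (v k), v k⟫_ℂ = (μ k : ℂ) := by
        rw [heig k, inner_smul_left, Complex.conj_ofReal]
        have h3 : ⟪v k, v k⟫_ℂ = 1 := by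
          rw [inner_self_eq_norm_sq_to_K, hnorm k]
          norm_num
        rw [h3, mul_one]
      rw [h2] at h
      simpa using h
    have hμ1 : ∑ k : Fin n, μ k = 1 := by
      have h := mix_hasSum e Finset.univ μ v Y (fun x => hrep x)
      have h2 := h.tsum_eq
      rw [show (∑' i, (⟪Y (e i), e i⟫_ℂ).re) = diagTr e Y from rfl] at h2
      rw [htr] at h2
      have h3 : ∑ k : Fin n, μ k * ‖v k‖ ^ 2 = ∑ k : Fin n, μ k :=
        Finset.sum_congr rfl fun k _ => by rw [hnorm k]; ring
      rw [← h3]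
      exact h2.symm
    have hx : diagSeq e Y = ∑ k : Fin n, μ k • absSq e (v k) := by
      funext i
      simp only [diagSeq, Finset.sum_apply, Pi.smul_apply, smul_eq_mul, absSq]
      exact mix_diag e Finset.univ μ v Y (fun x => hrep x) i
    rw [hx]
    exact (convex_convexHull ℝ _).sum_mem (fun k _ => hμ k) hμ1
      (fun k _ => subset_convexHull ℝ _ ⟨v k, hvS k, hnorm k, rfl⟩)
  · -- convexHull ⊆ momentSet
    intro x hx
    rw [convexHull_eq] at hx
    obtain ⟨ι, t, w, z, hw, hw1, hz, hx⟩ := hx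
    have hz' : ∀ k : ι, ∃ u : H, k ∈ t → (u ∈ S ∧ ‖u‖ = 1 ∧ z k = absSq e u) := by
      intro k
      by_cases hk : k ∈ t
      · obtain ⟨u, hu⟩ := hz k hk
        exact ⟨u, fun _ => hu⟩
      · exact ⟨0, fun h => absurd h hk⟩
    choose v hv using hz'
    obtain ⟨hmem, hdiag⟩ := mix_mem_DOps e S t w v hw hw1
      (fun k hk => (hv k hk).1) (fun k hk => (hv k hk).2.1)
    refine ⟨_, hmem, ?_⟩
    rw [hdiag, ← hx, Finset.centerMass_eq_of_sum_1 _ _ hw1]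
    exact Finset.sum_congr rfl fun k hk => by rw [(hv k hk).2.2]
end
end

section
/- Let S be a subspace of H with dim S = r < ∞. Then m_S is the union, over all orthonormal sets {s¹, …, s^r} of cardinality r contained in S, of the convex hulls conv{ |s¹|², …, |s^r|² }. -/
open scoped InnerProductSpace
open ContinuousLinearMap

noncomputable section

set_option linter.unusedSectionVars false
set_option maxHeartbeats 1000000

variable {H : Type*} [NormedAddCommGroup H] [InnerProductSpace ℂ H] [CompleteSpace H]

namespace Stmt2Aux

/-- Rank-one operator `x ↦ ⟪s,x⟫ • s`. -/
def rk (s : H) : H →L[ℂ] H := (innerSL ℂ s).smulRight s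

lemma rk_apply (s x : H) : rk s x = ⟪s, x⟫_ℂ • s := rfl

lemma isCompact_rk (s : H) : IsCompactOperator (rk s) := by
  refine ⟨(fun c : ℂ => c • s) '' Metric.closedBall 0 ‖s‖, ?_, ?_⟩
  · exact (isCompact_closedBall _ _).image (continuous_id.smul continuous_const)
  · refine Filter.mem_of_superset (Metric.closedBall_mem_nhds (0 : H) one_pos) ?_
    intro x hx
    refine ⟨⟪s, x⟫_ℂ, ?_, rfl⟩
    simp only [Metric.mem_closedBall, dist_zero_right] at hx ⊢
    calc ‖⟪s, x⟫_ℂ‖ ≤ ‖s‖ * ‖x‖ := norm_inner_le_norm s x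
    _ ≤ ‖s‖ * 1 := by gcongr
    _ = ‖s‖ := mul_one _

lemma hasSum_absSq (e : HilbertBasis ℕ ℂ H) (v : H) :
    HasSum (absSq e v) (‖v‖ ^ 2) := by
  have h := (e.hasSum_inner_mul_inner v v).mapL Complex.reCLM
  have h3 : Complex.reCLM ⟪v, v⟫_ℂ = ‖v‖ ^ 2 := inner_self_eq_norm_sq (𝕜 := ℂ) v
  rw [h3] at h
  refine HasSum.congr_fun h ?_
  intro j
  rw [← inner_conj_symm v (e j), mul_comm, Complex.mul_conj, Complex.normSq_eq_norm_sq]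
  simp [absSq]
  rw [← Complex.ofReal_pow, Complex.ofReal_re]

variable {r : ℕ}

/-- The mixture `∑ tᵢ sᵢ⊗sᵢ`. -/
def mix (t : Fin r → ℝ) (s : Fin r → H) : H →L[ℂ] H := ∑ i, (t i : ℂ) • rk (s i)

lemma mix_apply (t : Fin r → ℝ) (s : Fin r → H) (x : H) :
    mix t s x = ∑ i, (t i : ℂ) • (⟪s i, x⟫_ℂ • s i) := by
  simp [mix, rk_apply]

lemma isCompact_mix (t : Fin r → ℝ) (s : Fin r → H) : IsCompactOperator (mix t s) := by
  refine Finset.sum_induction _ (fun T : H →L[ℂ] H => IsCompactOperator T) ?_ ?_ ?_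
  · intro a b ha hb
    have := ha.add hb
    rwa [show (⇑a + ⇑b) = ⇑(a + b) from rfl] at this
  · exact isCompactOperator_zero
  · intro i _
    have := (isCompact_rk (s i)).smul ((t i : ℂ))
    rwa [show ((t i : ℂ) • ⇑(rk (s i))) = ⇑((t i : ℂ) • rk (s i)) from rfl] at this

lemma inner_mix_self (t : Fin r → ℝ) (s : Fin r → H) (x : H) :
    (⟪mix t s x, x⟫_ℂ).re = ∑ i, t i * ‖⟪s i, x⟫_ℂ‖ ^ 2 := by
  rw [mix_apply, sum_inner, Complex.re_sum]
  refine Finset.sum_congr rfl fun i _ => ?_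
  rw [inner_smul_left, inner_smul_left, Complex.conj_ofReal,
    mul_comm ((starRingEnd ℂ) ⟪s i, x⟫_ℂ) ⟪s i, x⟫_ℂ, Complex.mul_conj, Complex.normSq_eq_norm_sq]
  rw [← Complex.ofReal_mul, Complex.ofReal_re]

lemma diag_mix (e : HilbertBasis ℕ ℂ H) (t : Fin r → ℝ) (s : Fin r → H) (j : ℕ) :
    (⟪mix t s (e j), e j⟫_ℂ).re = ∑ i, t i * absSq e (s i) j := by
  rw [inner_mix_self]
  refine Finset.sum_congr rfl fun i _ => ?_
  rw [absSq, ← norm_inner_symm]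

lemma diagSeq_mix (e : HilbertBasis ℕ ℂ H) (t : Fin r → ℝ) (s : Fin r → H) :
    diagSeq e (mix t s) = ∑ i, t i • absSq e (s i) := by
  funext j
  rw [diagSeq, diag_mix]
  simp

lemma summable_diag_mix (e : HilbertBasis ℕ ℂ H) (t : Fin r → ℝ) (s : Fin r → H) :
    Summable fun j => (⟪mix t s (e j), e j⟫_ℂ).re := by
  have h : ∀ i : Fin r, Summable fun j => t i * absSq e (s i) j :=
    fun i => (hasSum_absSq e (s i)).summable.mul_left _
  exact ((hasSum_sum (fun i (_ : i ∈ Finset.univ) =>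
    ((hasSum_absSq e (s i)).mul_left (t i)))).summable).congr fun j => (diag_mix e t s j).symm

lemma diagTr_mix (e : HilbertBasis ℕ ℂ H) (t : Fin r → ℝ) (s : Fin r → H)
    (hs : ∀ i, ‖s i‖ = 1) : diagTr e (mix t s) = ∑ i, t i := by
  rw [diagTr, tsum_congr (diag_mix e t s),
    Summable.tsum_finsetSum (fun i _ => ((hasSum_absSq e (s i)).summable.mul_left (t i)))]
  refine Finset.sum_congr rfl fun i _ => ?_
  rw [((hasSum_absSq e (s i)).mul_left (t i)).tsum_eq, hs i]
  norm_num

lemma isPositive_mix (t : Fin r → ℝ) (s : Fin r → H) (ht : ∀ i, 0 ≤ t i) :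
    (mix t s).IsPositive := by
  constructor
  · intro x y
    show ⟪mix t s x, y⟫_ℂ = ⟪x, mix t s y⟫_ℂ
    rw [mix_apply, mix_apply, sum_inner, inner_sum]
    refine Finset.sum_congr rfl fun i _ => ?_
    rw [inner_smul_left, inner_smul_left, inner_smul_right, inner_smul_right,
      Complex.conj_ofReal, inner_conj_symm]
    ring
  · intro x
    rw [ContinuousLinearMap.reApplyInnerSelf_apply, RCLike.re_to_complex, inner_mix_self]
    exact Finset.sum_nonneg fun i _ => mul_nonneg (ht i) (by positivity)

lemma projOp_apply_of_mem {S : Submodule ℂ H} [S.HasOrthogonalProjection] {y : H}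
    (hy : y ∈ S) : projOp S y = y := by
  exact Submodule.starProjection_eq_self_iff.mpr hy

lemma projOp_comp_mix (S : Submodule ℂ H) [S.HasOrthogonalProjection]
    (t : Fin r → ℝ) (s : Fin r → H) (hs : ∀ i, s i ∈ S) :
    projOp S ∘L mix t s = mix t s := by
  ext x
  rw [ContinuousLinearMap.comp_apply, mix_apply]
  refine projOp_apply_of_mem (Submodule.sum_mem _ fun i _ => ?_)
  exact Submodule.smul_mem _ _ (Submodule.smul_mem _ _ (hs i))

/-- Membership in DOps for mixtures. -/
lemma mix_mem_DOps (e : HilbertBasis ℕ ℂ H) (S : Submodule ℂ H) [S.HasOrthogonalProjection]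
    (t : Fin r → ℝ) (s : Fin r → H) (hs : ∀ i, s i ∈ S) (hnorm : ∀ i, ‖s i‖ = 1)
    (ht0 : ∀ i, 0 ≤ t i) (ht1 : ∑ i, t i = 1) : mix t s ∈ DOps e S := by
  refine ⟨⟨isCompact_mix t s, isPositive_mix t s ht0, summable_diag_mix e t s, ?_⟩,
    projOp_comp_mix S t s hs⟩
  rw [diagTr_mix e t s hnorm, ht1]

/-- Convex hull membership for ranges over `Fin n`. -/
lemma mem_convexHull_fin {n : ℕ} {v : Fin n → (ℕ → ℝ)} {x : ℕ → ℝ} :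
    x ∈ convexHull ℝ (Set.range v) ↔
      ∃ t : Fin n → ℝ, (∀ i, 0 ≤ t i) ∧ ∑ i, t i = 1 ∧ ∑ i, t i • v i = x := by
  rw [convexHull_range_eq_exists_affineCombination]
  classical
  constructor
  · rintro ⟨F, w, h0, h1, rfl⟩
    refine ⟨fun i => if i ∈ F then w i else 0, fun i => ?_, ?_, ?_⟩
    · dsimp only
      split_ifs with h
      exacts [h0 _ h, le_rfl]
    · dsimp only
      rw [Finset.sum_ite_mem, Finset.univ_inter, h1]
    · dsimp only
      rw [Finset.affineCombination_eq_linear_combination _ _ _ h1]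
      simp only [ite_smul, zero_smul]
      rw [Finset.sum_ite_mem, Finset.univ_inter]
  · rintro ⟨t, h0, h1, rfl⟩
    exact ⟨Finset.univ, t, fun i _ => h0 i, h1,
      Finset.affineCombination_eq_linear_combination _ _ _ h1⟩

end Stmt2Aux

open Stmt2Aux in
/-- for `dim S = r < ∞`, `m_S` is the union over all orthonormal sets
`{s¹,…,s^r} ⊂ S` of `conv{|s¹|²,…,|s^r|²}`. -/
theorem stmt_2 (e : HilbertBasis ℕ ℂ H) (S : Submodule ℂ H) [FiniteDimensional ℂ S]
    (r : ℕ) (hr : Module.finrank ℂ S = r) :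
    momentSet e S =
      ⋃ (s : Fin r → H) (_ : Orthonormal ℂ s ∧ ∀ i, s i ∈ S),
        convexHull ℝ (Set.range fun i : Fin r => absSq e (s i)) := by
  apply Set.Subset.antisymm
  · -- forward direction
    rintro x ⟨Y, ⟨⟨hYc, hYpos, hYsum, hYtr⟩, hPY⟩, rfl⟩
    have hmem : ∀ z, Y z ∈ S := by
      intro z
      have h : (projOp S ∘L Y) z = Y z := by rw [hPY]
      rw [ContinuousLinearMap.comp_apply] at h
      rw [← h]
      exact Submodule.coe_mem _
    let T : S →ₗ[ℂ] S :=
      { toFun := fun z => ⟨Y z, hmem z⟩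
        map_add' := by intros; ext; simp
        map_smul' := by intros; ext; simp }
    have hYsymm : (Y : H →ₗ[ℂ] H).IsSymmetric :=
      (ContinuousLinearMap.isSelfAdjoint_iff_isSymmetric).mp hYpos.isSelfAdjoint
    have hYsym' : ∀ x y : H, ⟪Y x, y⟫_ℂ = ⟪x, Y y⟫_ℂ := fun x y => hYsymm x y
    have hTsymm : T.IsSymmetric := by
      intro z w
      rw [Submodule.coe_inner, Submodule.coe_inner]
      exact hYsym' (z : H) (w : H)
    let b := hTsymm.eigenvectorBasis hr
    let μ : Fin r → ℝ := hTsymm.eigenvalues hr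
    set s : Fin r → H := fun i => (b i : H) with hs
    have hb : ∀ i, Y (s i) = (μ i : ℂ) • s i := by
      intro i
      have h0 := hTsymm.apply_eigenvectorBasis hr i
      have h2 := congrArg (Subtype.val) h0
      rw [Submodule.coe_smul] at h2
      exact h2
    have hsnorm : ∀ i, ‖s i‖ = 1 := fun i => by
      exact b.orthonormal.1 i
    have hson : Orthonormal ℂ s := by
      constructor
      · exact hsnorm
      · intro i j hij
        have h : (⟪b i, b j⟫_ℂ : ℂ) = 0 := b.orthonormal.2 hij
        rw [Submodule.coe_inner] at h
        exact h
    have hsS : ∀ i, s i ∈ S := fun i => (b i).2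
    have hkill : ∀ v ∈ Sᗮ, Y v = 0 := by
      intro v hv
      have h3 : ⟪Y (Y v), v⟫_ℂ = 0 := (Submodule.mem_orthogonal S v).mp hv _ (hmem _)
      have h2 : ⟪Y v, Y v⟫_ℂ = 0 := by
        rw [hYsym' v (Y v), ← inner_conj_symm, h3, map_zero]
      exact inner_self_eq_zero.mp h2
    have hYmix : Y = mix μ s := by
      ext z
      have hperp : z - (S.orthogonalProjectionOnto z : H) ∈ Sᗮ :=
        Submodule.sub_starProjection_mem_orthogonal z
      have hz : Y z = Y (S.orthogonalProjectionOnto z : H) := by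
        have h4 : Y z - Y (S.orthogonalProjectionOnto z : H) = 0 := by
          rw [← map_sub]
          exact hkill _ hperp
        exact sub_eq_zero.mp h4
      have hinner : ∀ i, ⟪s i, (S.orthogonalProjectionOnto z : H)⟫_ℂ = ⟪s i, z⟫_ℂ := by
        intro i
        have h3 : ⟪s i, z - (S.orthogonalProjectionOnto z : H)⟫_ℂ = 0 :=
          (Submodule.mem_orthogonal S _).mp hperp (s i) (hsS i)
        rw [inner_sub_right] at h3
        exact (sub_eq_zero.mp h3).symm
      have hexp : (S.orthogonalProjectionOnto z : H) = ∑ i, ⟪s i, z⟫_ℂ • s i := by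
        conv_lhs => rw [← b.sum_repr' (S.orthogonalProjectionOnto z)]
        push_cast [Submodule.coe_sum, Submodule.coe_smul]
        refine Finset.sum_congr rfl fun i _ => ?_
        congr 1
        exact (Submodule.coe_inner S (b i) (S.orthogonalProjectionOnto z)).symm ▸
          ((Submodule.coe_inner S (b i) (S.orthogonalProjectionOnto z)).trans (hinner i))
      show Y z = mix μ s z
      rw [hz, hexp, map_sum, mix_apply]
      refine Finset.sum_congr rfl fun i _ => ?_
      rw [map_smul, hb i, smul_smul, smul_smul, mul_comm]
    have hμ0 : ∀ i, 0 ≤ μ i := by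
      intro i
      have h := hYpos.2 (s i)
      rw [ContinuousLinearMap.reApplyInnerSelf_apply, RCLike.re_to_complex, hb i,
        inner_smul_left, Complex.conj_ofReal, inner_self_eq_norm_sq_to_K, hsnorm i] at h
      simpa using h
    have htr : ∑ i, μ i = 1 := by
      rw [← hYtr, hYmix, diagTr_mix e μ s hsnorm]
    refine Set.mem_iUnion.mpr ⟨s, Set.mem_iUnion.mpr ⟨⟨hson, hsS⟩, ?_⟩⟩
    rw [hYmix, diagSeq_mix]
    exact mem_convexHull_fin.mpr ⟨μ, hμ0, htr, rfl⟩
  · -- reverse direction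
    rintro x hx
    simp only [Set.mem_iUnion] at hx
    obtain ⟨s, ⟨hson, hsS⟩, hx⟩ := hx
    obtain ⟨t, ht0, ht1, rfl⟩ := mem_convexHull_fin.mp hx
    refine ⟨mix t s, mix_mem_DOps e S t s hsS (fun i => hson.1 i) ht0 ht1, ?_⟩
    rw [diagSeq_mix]
end
end

section
/- Let S be a finite-dimensional subspace of H. Then m_S = W(A_{S,E}) ∩ { x ∈ ℓ¹(ℝ) : x_i ≥ 0 for all i and Σ_{i=1}^∞ x_i = 1 }, where A_{S,E} = {P_S E_j P_S}_{j=1}^∞. -/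
open scoped InnerProductSpace
open ContinuousLinearMap

noncomputable section

variable {H : Type*} [NormedAddCommGroup H] [InnerProductSpace ℂ H] [CompleteSpace H]

lemma projOp_selfAdj (S : Submodule ℂ H) [S.HasOrthogonalProjection] (x y : H) :
    ⟪projOp S x, y⟫_ℂ = ⟪x, projOp S y⟫_ℂ :=
  S.inner_starProjection_left_eq_right x y

lemma projOp_idem (S : Submodule ℂ H) [S.HasOrthogonalProjection] :
    projOp S ∘L projOp S = projOp S := by
  ext x
  simp [projOp, Submodule.orthogonalProjectionOnto_mem_subspace_eq_self]
  exact Submodule.starProjection_eq_self_iff.mpr (S.starProjection_apply_mem x)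

/-- Key computation: `tr(T ∘ P E_j P) = Re ⟪P T P e_j, e_j⟫`. -/
lemma key_tr (e : HilbertBasis ℕ ℂ H) (S : Submodule ℂ H) [S.HasOrthogonalProjection]
    (T : H →L[ℂ] H) (j : ℕ) :
    diagTr e (T ∘L ASE e S j) =
      (⟪(projOp S ∘L T ∘L projOp S) (e j), e j⟫_ℂ).re := by
  have hterm : ∀ i, ⟪(T ∘L ASE e S j) (e i), e i⟫_ℂ
      = ⟪T (projOp S (e j)), e i⟫_ℂ * ⟪e i, projOp S (e j)⟫_ℂ := by
    intro i
    have : (T ∘L ASE e S j) (e i)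
        = ⟪e j, projOp S (e i)⟫_ℂ • T (projOp S (e j)) := by
      simp [ASE, Eproj, projOp, comp_apply, map_smul]
    rw [this, inner_smul_left]
    have h1 : (starRingEnd ℂ) ⟪e j, projOp S (e i)⟫_ℂ = ⟪projOp S (e i), e j⟫_ℂ := by
      rw [inner_conj_symm]
    rw [h1, projOp_selfAdj]
    ring
  have hsum : Summable fun i => ⟪T (projOp S (e j)), e i⟫_ℂ * ⟪e i, projOp S (e j)⟫_ℂ :=
    e.summable_inner_mul_inner _ _
  have htsum : ∑' i, (⟪T (projOp S (e j)), e i⟫_ℂ * ⟪e i, projOp S (e j)⟫_ℂ)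
      = ⟪T (projOp S (e j)), projOp S (e j)⟫_ℂ := e.tsum_inner_mul_inner _ _
  unfold diagTr
  calc ∑' i, (⟪(T ∘L ASE e S j) (e i), e i⟫_ℂ).re
      = ∑' i, (⟪T (projOp S (e j)), e i⟫_ℂ * ⟪e i, projOp S (e j)⟫_ℂ).re := by
        simp_rw [hterm]
    _ = (∑' i, (⟪T (projOp S (e j)), e i⟫_ℂ * ⟪e i, projOp S (e j)⟫_ℂ)).re :=
        (Complex.re_tsum hsum).symm
    _ = (⟪T (projOp S (e j)), projOp S (e j)⟫_ℂ).re := by rw [htsum]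
    _ = (⟪(projOp S ∘L T ∘L projOp S) (e j), e j⟫_ℂ).re := by
        rw [comp_apply, comp_apply, projOp_selfAdj]

/-- for `S` finite dimensional,
`m_S = W(A_{S,E}) ∩ {x ∈ ℓ¹(ℝ) : xᵢ ≥ 0, Σᵢ xᵢ = 1}`. -/
theorem stmt_3 (e : HilbertBasis ℕ ℂ H) (S : Submodule ℂ H) [FiniteDimensional ℂ S] :
    momentSet e S =
      jnr e (ASE e S) ∩
        {x : ℕ → ℝ | (∀ i, 0 ≤ x i) ∧ Summable x ∧ ∑' i, x i = 1} := by
  have hPsa : IsSelfAdjoint (projOp S) := isSelfAdjoint_starProjection S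
  ext x
  constructor
  · rintro ⟨Y, ⟨⟨hYc, hYp, hYs, hYt⟩, hPY⟩, rfl⟩
    have hYsa : IsSelfAdjoint Y := hYp.isSelfAdjoint
    -- Y ∘ P = Y
    have hYP : Y ∘L projOp S = Y := by
      have := congrArg ContinuousLinearMap.adjoint hPY
      rwa [adjoint_comp, hYsa.adjoint_eq, hPsa.adjoint_eq] at this
    have hPYP : projOp S ∘L Y ∘L projOp S = Y := by rw [hYP, hPY]
    refine ⟨⟨Y, ⟨hYc, hYp, hYs, hYt⟩, fun j => ?_⟩, fun i => ?_, ?_, ?_⟩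
    · rw [key_tr, hPYP]; rfl
    · exact (Complex.nonneg_iff.mp (hYp.inner_nonneg_left (e i))).1
    · exact hYs
    · exact hYt
  · rintro ⟨⟨ρ, ⟨hρc, hρp, _, _⟩, hx⟩, hnn, hsum, htot⟩
    set Y : H →L[ℂ] H := projOp S ∘L ρ ∘L projOp S with hY
    have hdiag : ∀ i, (⟪Y (e i), e i⟫_ℂ).re = x i := fun i => by
      rw [hx i, key_tr]
    have hYc : IsCompactOperator Y := by
      have h1 : IsCompactOperator (⇑ρ ∘ ⇑(projOp S)) := hρc.comp_clm (projOp S)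
      have h2 : IsCompactOperator (⇑(projOp S) ∘ (⇑ρ ∘ ⇑(projOp S))) :=
        h1.continuous_comp (projOp S).continuous
      exact h2
    have hYp : Y.IsPositive := by
      have := hρp.conj_adjoint (projOp S)
      rwa [hPsa.adjoint_eq] at this
    have hYs : Summable (fun i => (⟪Y (e i), e i⟫_ℂ).re) := by
      simpa only [hdiag] using hsum
    have hYt : diagTr e Y = 1 := by
      unfold diagTr; simp_rw [hdiag]; exact htot
    have hPY : projOp S ∘L Y = Y := by
      rw [hY, ← comp_assoc, ← comp_assoc, projOp_idem, comp_assoc]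
    refine ⟨Y, ⟨⟨hYc, hYp, hYs, hYt⟩, hPY⟩, funext fun i => hdiag i⟩
end
end

section
/- Let S be a finite-dimensional subspace of H and A_{S,E} = {P_S E_j P_S}_{j=1}^∞. If the classical joint numerical range W_class(A_{S,E}) = { (⟨P_S E_j P_S x, x⟩)_{j∈ℕ} : x ∈ H, ‖x‖ = 1 } is a convex set, then W_class(A_{S,E}) = W(A_{S,E}). -/
open scoped InnerProductSpace
open ContinuousLinearMap

noncomputable section

variable {H : Type*} [NormedAddCommGroup H] [InnerProductSpace ℂ H] [CompleteSpace H]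

/-- The classical joint numerical range of a sequence of operators. -/
def jnrClass (A : ℕ → (H →L[ℂ] H)) : Set (ℕ → ℝ) :=
  {w | ∃ x : H, ‖x‖ = 1 ∧ ∀ j, w j = (⟪A j x, x⟫_ℂ).re}

section Aux

set_option linter.unusedSectionVars false
set_option maxHeartbeats 1000000

lemma projOp_apply' (S : Submodule ℂ H) [S.HasOrthogonalProjection] (x : H) :
    projOp S x = (S.orthogonalProjectionOnto x : H) := rfl

lemma inner_projOp_left' (S : Submodule ℂ H) [S.HasOrthogonalProjection] (u v : H) :
    ⟪projOp S u, v⟫_ℂ = ⟪u, projOp S v⟫_ℂ := by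
  exact Submodule.inner_starProjection_left_eq_right S u v

lemma ASE_apply' (e : HilbertBasis ℕ ℂ H) (S : Submodule ℂ H) [S.HasOrthogonalProjection]
    (j : ℕ) (x : H) :
    ASE e S j x = ⟪e j, projOp S x⟫_ℂ • projOp S (e j) := by
  simp [ASE, Eproj]

lemma inner_ASE_self' (e : HilbertBasis ℕ ℂ H) (S : Submodule ℂ H) [S.HasOrthogonalProjection]
    (j : ℕ) (x : H) :
    ⟪ASE e S j x, x⟫_ℂ = (‖⟪e j, projOp S x⟫_ℂ‖ : ℂ) ^ 2 := by
  rw [ASE_apply', inner_smul_left, inner_projOp_left', RCLike.conj_mul]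
  norm_cast

lemma diagTr_comp' (e : HilbertBasis ℕ ℂ H) (S : Submodule ℂ H) [S.HasOrthogonalProjection]
    (ρ : H →L[ℂ] H) (j : ℕ) :
    diagTr e (ρ ∘L ASE e S j) = (⟪ρ (projOp S (e j)), projOp S (e j)⟫_ℂ).re := by
  have h : HasSum (fun i => ⟪ρ (projOp S (e j)), e i⟫_ℂ * ⟪e i, projOp S (e j)⟫_ℂ)
      ⟪ρ (projOp S (e j)), projOp S (e j)⟫_ℂ := e.hasSum_inner_mul_inner _ _
  have h2 : ∀ i, (⟪(ρ ∘L ASE e S j) (e i), e i⟫_ℂ).re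
      = (⟪ρ (projOp S (e j)), e i⟫_ℂ * ⟪e i, projOp S (e j)⟫_ℂ).re := by
    intro i
    rw [comp_apply, ASE_apply', map_smul, inner_smul_left, inner_conj_symm,
      inner_projOp_left', mul_comm]
  unfold diagTr
  rw [tsum_congr h2]
  exact (h.mapL Complex.reCLM).tsum_eq

lemma isCompactOperator_rankOne' (x y : H) :
    IsCompactOperator ⇑((innerSL ℂ x).smulRight y) := by
  have hg : IsCompactOperator (ContinuousLinearMap.toSpanSingleton ℂ y) :=
    ⟨ContinuousLinearMap.toSpanSingleton ℂ y '' Metric.closedBall 0 1,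
      (isCompact_closedBall (0:ℂ) 1).image (ContinuousLinearMap.toSpanSingleton ℂ y).continuous,
      Filter.mem_of_superset (Metric.closedBall_mem_nhds 0 one_pos)
        (Set.subset_preimage_image _ _)⟩
  exact hg.comp_clm (innerSL ℂ x)

lemma rankOne_diag_hasSum' (e : HilbertBasis ℕ ℂ H) (x : H) :
    HasSum (fun i => (⟪((innerSL ℂ x).smulRight x) (e i), e i⟫_ℂ).re) (‖x‖ ^ 2) := by
  have h : HasSum (fun i => ⟪x, e i⟫_ℂ * ⟪e i, x⟫_ℂ) ⟪x, x⟫_ℂ :=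
    e.hasSum_inner_mul_inner x x
  have h2 := h.mapL Complex.reCLM
  have h3 : ∀ i, (⟪((innerSL ℂ x).smulRight x) (e i), e i⟫_ℂ).re
      = Complex.reCLM (⟪x, e i⟫_ℂ * ⟪e i, x⟫_ℂ) := by
    intro i
    simp only [ContinuousLinearMap.smulRight_apply, innerSL_apply_apply, inner_smul_left,
      inner_conj_symm, Complex.reCLM_apply]
    ring_nf
  rw [show (‖x‖:ℝ)^2 = Complex.reCLM ⟪x, x⟫_ℂ by
    simp [Complex.reCLM_apply, ← RCLike.re_to_complex, inner_self_eq_norm_sq]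
    rw [← Complex.ofReal_pow]; exact (RCLike.ofReal_re (K := ℂ) _).symm]
  exact (funext h3) ▸ h2

lemma isDensity_rankOne' (e : HilbertBasis ℕ ℂ H) {x : H} (hx : ‖x‖ = 1) :
    IsDensity e ((innerSL ℂ x).smulRight x) := by
  refine ⟨isCompactOperator_rankOne' x x, ⟨?_, ?_⟩, (rankOne_diag_hasSum' e x).summable, ?_⟩
  · intro u v
    simp only [ContinuousLinearMap.coe_coe, ContinuousLinearMap.smulRight_apply, innerSL_apply_apply,
      inner_smul_left, inner_smul_right, inner_conj_symm]
    ring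
  · intro v
    simp only [ContinuousLinearMap.reApplyInnerSelf, ContinuousLinearMap.smulRight_apply,
      innerSL_apply_apply, inner_smul_left, RCLike.conj_mul, ← RCLike.ofReal_pow, RCLike.ofReal_re]
    positivity
  · rw [diagTr, (rankOne_diag_hasSum' e x).tsum_eq, hx, one_pow]

lemma trace_le_one' (e : HilbertBasis ℕ ℂ H) {ρ : H →L[ℂ] H}
    (hsa : IsSelfAdjoint ρ) (hpos : ∀ v, 0 ≤ (⟪ρ v, v⟫_ℂ).re)
    (hsummable : Summable (fun i => (⟪ρ (e i), e i⟫_ℂ).re))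
    (htr : ∑' i, (⟪ρ (e i), e i⟫_ℂ).re = 1)
    {n : ℕ} {x : Fin n → H} (hx : Orthonormal ℂ x) :
    ∑ k, (⟪ρ (x k), x k⟫_ℂ).re ≤ 1 := by
  classical
  have hsym : ∀ u v : H, ⟪ρ u, v⟫_ℂ = ⟪u, ρ v⟫_ℂ := fun u v => hsa.isSymmetric u v
  have hxi : ∀ k l, ⟪x k, x l⟫_ℂ = if k = l then 1 else 0 := orthonormal_iff_ite.mp hx
  set p : ℕ → H := fun i => ∑ k, ⟪x k, e i⟫_ℂ • x k with hp
  set t' : ℂ := ∑ k, ⟪ρ (x k), x k⟫_ℂ with ht'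
  set u' : ℂ := ∑ k, ⟪x k, ρ (x k)⟫_ℂ with hu'
  have expand_pp : ∀ i, ⟪ρ (p i), p i⟫_ℂ
      = ∑ k, ∑ l, ⟪ρ (x k), x l⟫_ℂ * (⟪x l, e i⟫_ℂ * ⟪e i, x k⟫_ℂ) := by
    intro i
    simp only [hp, map_sum, map_smul, sum_inner, inner_sum, inner_smul_left, inner_smul_right,
      inner_conj_symm, Finset.mul_sum]
    rw [Finset.sum_comm]
    refine Finset.sum_congr rfl fun k _ => Finset.sum_congr rfl fun l _ => by ring
  have Hpp : HasSum (fun i => ⟪ρ (p i), p i⟫_ℂ) t' := by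
    have h : HasSum (fun i => ∑ k, ∑ l, ⟪ρ (x k), x l⟫_ℂ * (⟪x l, e i⟫_ℂ * ⟪e i, x k⟫_ℂ))
        (∑ k, ∑ l, ⟪ρ (x k), x l⟫_ℂ * ⟪x l, x k⟫_ℂ) :=
      hasSum_sum fun k _ => hasSum_sum fun l _ =>
        (e.hasSum_inner_mul_inner (x l) (x k)).mul_left _
    have hval : (∑ k, ∑ l, ⟪ρ (x k), x l⟫_ℂ * ⟪x l, x k⟫_ℂ) = t' := by
      refine Finset.sum_congr rfl fun k _ => ?_
      rw [Finset.sum_eq_single k]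
      · rw [hxi k k, if_pos rfl, mul_one]
      · intro l _ hlk
        rw [hxi l k, if_neg hlk, mul_zero]
      · intro hk; exact absurd (Finset.mem_univ k) hk
    rw [hval] at h
    simpa only [expand_pp] using h
  have Hpe : HasSum (fun i => ⟪ρ (p i), e i⟫_ℂ) t' := by
    have expand : ∀ i, ⟪ρ (p i), e i⟫_ℂ = ∑ k, ⟪ρ (x k), e i⟫_ℂ * ⟪e i, x k⟫_ℂ := by
      intro i
      simp only [hp, map_sum, map_smul, sum_inner, inner_smul_left, inner_conj_symm]
      refine Finset.sum_congr rfl fun k _ => by ring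
    have h : HasSum (fun i => ∑ k, ⟪ρ (x k), e i⟫_ℂ * ⟪e i, x k⟫_ℂ) t' :=
      hasSum_sum fun k _ => e.hasSum_inner_mul_inner (ρ (x k)) (x k)
    simpa only [expand] using h
  have Hep : HasSum (fun i => ⟪ρ (e i), p i⟫_ℂ) u' := by
    have expand : ∀ i, ⟪ρ (e i), p i⟫_ℂ = ∑ k, ⟪x k, e i⟫_ℂ * ⟪e i, ρ (x k)⟫_ℂ := by
      intro i
      simp only [hp, inner_sum, inner_smul_right]
      refine Finset.sum_congr rfl fun k _ => by rw [hsym (e i) (x k)]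
    have h : HasSum (fun i => ∑ k, ⟪x k, e i⟫_ℂ * ⟪e i, ρ (x k)⟫_ℂ) u' :=
      hasSum_sum fun k _ => e.hasSum_inner_mul_inner (x k) (ρ (x k))
    simpa only [expand] using h
  have hdiag : HasSum (fun i => (⟪ρ (e i), e i⟫_ℂ).re) 1 := htr ▸ hsummable.hasSum
  have hd : HasSum (fun i => (⟪ρ (e i - p i), e i - p i⟫_ℂ).re)
      (1 - u'.re - t'.re + t'.re) := by
    have h1 := ((hdiag.sub (Hep.mapL Complex.reCLM)).sub
      (Hpe.mapL Complex.reCLM)).add (Hpp.mapL Complex.reCLM)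
    have expand : ∀ i, (⟪ρ (e i - p i), e i - p i⟫_ℂ).re
        = (⟪ρ (e i), e i⟫_ℂ).re - Complex.reCLM ⟪ρ (e i), p i⟫_ℂ
          - Complex.reCLM ⟪ρ (p i), e i⟫_ℂ + Complex.reCLM ⟪ρ (p i), p i⟫_ℂ := by
      intro i
      simp only [map_sub, inner_sub_left, inner_sub_right, Complex.reCLM_apply, Complex.sub_re,
        Complex.add_re]
      ring
    simpa only [expand, Complex.reCLM_apply] using h1
  have hnonneg : ∀ i, 0 ≤ (⟪ρ (e i - p i), e i - p i⟫_ℂ).re := fun i => hpos _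
  have h0 : 0 ≤ 1 - u'.re - t'.re + t'.re := hd.tsum_eq ▸ tsum_nonneg hnonneg
  have hre : u'.re = t'.re := by
    simp only [hu', ht', Complex.re_sum]
    exact Finset.sum_congr rfl fun k _ => inner_re_symm (𝕜 := ℂ) (x k) (ρ (x k))
  have hts : t'.re = ∑ k, (⟪ρ (x k), x k⟫_ℂ).re := by simp [ht', Complex.re_sum]
  linarith

end Aux

/-- if `W_class(A_{S,E})` is convex then it equals `W(A_{S,E})`. -/
theorem stmt_5 (e : HilbertBasis ℕ ℂ H) (S : Submodule ℂ H) [FiniteDimensional ℂ S]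
    (hconv : Convex ℝ (jnrClass (ASE e S))) :
    jnrClass (ASE e S) = jnr e (ASE e S) := by
  classical
  apply Set.Subset.antisymm
  · -- W_class ⊆ W : use the rank-one density operator x ⊗ x
    rintro w ⟨x, hx, hw⟩
    refine ⟨(innerSL ℂ x).smulRight x, isDensity_rankOne' e hx, fun j => ?_⟩
    rw [diagTr_comp', hw j, inner_ASE_self']
    have h1 : ((innerSL ℂ x).smulRight x) (projOp S (e j)) = ⟪x, projOp S (e j)⟫_ℂ • x := by simp
    rw [h1, inner_smul_left, RCLike.conj_mul]
    have h2 : ‖⟪x, projOp S (e j)⟫_ℂ‖ = ‖⟪e j, projOp S x⟫_ℂ‖ := by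
      rw [← inner_projOp_left' S x (e j), norm_inner_symm]
    rw [h2]
    norm_cast
  · -- W ⊆ W_class
    rintro w ⟨ρ, hρ, hw⟩
    obtain ⟨hcpt, hρpos, hsummable, htr⟩ := hρ
    have hsa : IsSelfAdjoint ρ := hρpos.isSelfAdjoint
    have hpos : ∀ v : H, 0 ≤ (⟪ρ v, v⟫_ℂ).re := by
      intro v
      simpa [ContinuousLinearMap.reApplyInnerSelf, RCLike.re_to_complex] using hρpos.2 v
    -- diagonalize the compression of ρ to S
    set n := Module.finrank ℂ S with hn
    set T : S →ₗ[ℂ] S :=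
      S.orthogonalProjectionOnto.toLinearMap ∘ₗ ((ρ : H →ₗ[ℂ] H) ∘ₗ S.subtype) with hT
    have hTsym : T.IsSymmetric := by
      intro u v
      have h1 : ⟪T u, v⟫_ℂ = ⟪ρ (u : H), (v : H)⟫_ℂ := by
        simpa [hT] using Submodule.inner_orthogonalProjectionOnto_eq_of_mem_right (K := S) v (ρ (u : H))
      have h2 : ⟪u, T v⟫_ℂ = ⟪(u : H), ρ (v : H)⟫_ℂ := by
        simpa [hT] using Submodule.inner_orthogonalProjectionOnto_eq_of_mem_left (K := S) u (ρ (v : H))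
      rw [h1, h2]
      exact hsa.isSymmetric (u : H) (v : H)
    set b := hTsym.eigenvectorBasis hn.symm with hb
    set μ : Fin n → ℝ := hTsym.eigenvalues hn.symm with hμdef
    set y : Fin n → H := fun k => (b k : H) with hy
    have hortho : Orthonormal ℂ y := by
      rw [orthonormal_iff_ite]
      intro k l
      have := orthonormal_iff_ite.mp b.orthonormal k l
      simpa [hy, ← Submodule.coe_inner] using this
    have hkey : ∀ k l, ⟪ρ (y k), y l⟫_ℂ = if k = l then (μ k : ℂ) else 0 := by
      intro k l
      have h1 : ⟪ρ (y k), y l⟫_ℂ = ⟪S.orthogonalProjectionOnto (ρ (y k)), b l⟫_ℂ :=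
        (Submodule.inner_orthogonalProjectionOnto_eq_of_mem_right (K := S) (b l) (ρ (y k))).symm
      have h2 : S.orthogonalProjectionOnto (ρ (y k)) = T (b k) := rfl
      rw [h1, h2, hTsym.apply_eigenvectorBasis hn.symm k, inner_smul_left]
      have := orthonormal_iff_ite.mp b.orthonormal k l
      rw [this]
      by_cases hkl : k = l <;> simp [hkl, hμdef, Complex.conj_ofReal]
    have hμnonneg : ∀ k, 0 ≤ μ k := by
      intro k
      have h := hpos (y k)
      rw [hkey k k, if_pos rfl] at h
      simpa using h
    -- the weights sum to at most 1
    have hsum_le : ∑ k, μ k ≤ 1 := by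
      have h := trace_le_one' e hsa hpos hsummable htr hortho
      have heq : ∑ k, (⟪ρ (y k), y k⟫_ℂ).re = ∑ k, μ k := by
        refine Finset.sum_congr rfl fun k _ => ?_
        rw [hkey k k, if_pos rfl]
        simp
      rwa [heq] at h
    -- a unit vector orthogonal to S
    have hne : Sᗮ ≠ ⊥ := by
      intro hbot
      have hS : S = ⊤ := Submodule.orthogonal_eq_bot_iff.mp hbot
      have : FiniteDimensional ℂ (⊤ : Submodule ℂ H) := hS ▸ ‹FiniteDimensional ℂ S›
      have : FiniteDimensional ℂ H := Module.Finite.equiv (Submodule.topEquiv (M := H))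
      exact Module.Finite.not_linearIndependent_of_infinite _ e.orthonormal.linearIndependent
    obtain ⟨v, hvmem, hvne⟩ := Submodule.exists_mem_ne_zero_of_ne_bot hne
    set x₀ : H := ‖v‖⁻¹ • v with hx₀
    have hx₀mem : x₀ ∈ Sᗮ := Submodule.smul_mem _ _ hvmem
    have hx₀norm : ‖x₀‖ = 1 := by
      rw [hx₀, norm_smul, norm_inv, norm_norm, inv_mul_cancel₀ (norm_ne_zero_iff.mpr hvne)]
    have hPx₀ : projOp S x₀ = 0 := by
      rw [projOp_apply', Submodule.orthogonalProjectionOnto_apply_of_mem_orthogonal hx₀mem]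
      simp
    -- the classical points
    set z : Option (Fin n) → (ℕ → ℝ) :=
      fun o => match o with
        | none => fun j => (⟪ASE e S j x₀, x₀⟫_ℂ).re
        | some k => fun j => (⟪ASE e S j (y k), y k⟫_ℂ).re with hz
    set c : Option (Fin n) → ℝ :=
      fun o => match o with
        | none => 1 - ∑ k, μ k
        | some k => μ k with hc
    have hzmem : ∀ o, z o ∈ jnrClass (ASE e S) := by
      intro o
      match o with
      | none => exact ⟨x₀, hx₀norm, fun j => rfl⟩
      | some k => exact ⟨y k, hortho.1 k, fun j => rfl⟩
    have hcnonneg : ∀ o, 0 ≤ c o := by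
      intro o
      match o with
      | none => simpa [hc] using hsum_le
      | some k => exact hμnonneg k
    have hcsum : ∑ o, c o = 1 := by
      rw [Fintype.sum_option]
      simp [hc]
    have hmem := hconv.sum_mem (fun o _ => hcnonneg o) hcsum (fun o _ => hzmem o)
    -- identify w with the convex combination
    have hweq : w = ∑ o, c o • z o := by
      funext j
      -- value of z at each index
      have hznone : z none j = 0 := by
        simp [hz, inner_ASE_self', hPx₀]
      have hzsome : ∀ k, z (some k) j = ‖⟪y k, e j⟫_ℂ‖ ^ 2 := by
        intro k
        have hPy : projOp S (y k) = y k := by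
          exact Submodule.starProjection_eq_self_iff.mpr (b k).2
        rw [hz]
        show (⟪ASE e S j (y k), y k⟫_ℂ).re = ‖⟪y k, e j⟫_ℂ‖ ^ 2
        rw [inner_ASE_self', hPy, ← norm_inner_symm (y k) (e j)]
        norm_cast
      -- value of w
      have hPe : projOp S (e j) = ∑ k, ⟪y k, e j⟫_ℂ • y k := by
        rw [projOp_apply', b.orthogonalProjectionOnto_apply_eq_sum (e j)]
        push_cast
        rfl
      have hwj : w j = ∑ k, μ k * ‖⟪y k, e j⟫_ℂ‖ ^ 2 := by
        rw [hw j, diagTr_comp', hPe]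
        have hexp : ⟪ρ (∑ k, ⟪y k, e j⟫_ℂ • y k), ∑ k, ⟪y k, e j⟫_ℂ • y k⟫_ℂ
            = ∑ k, ∑ l, ⟪ρ (y k), y l⟫_ℂ * (⟪y l, e j⟫_ℂ * ⟪e j, y k⟫_ℂ) := by
          simp only [map_sum, map_smul, sum_inner, inner_sum, inner_smul_left, inner_smul_right,
            inner_conj_symm, Finset.mul_sum]
          rw [Finset.sum_comm]
          exact Finset.sum_congr rfl fun k _ => Finset.sum_congr rfl fun l _ => by ring
        have hinner : ⟪ρ (∑ k, ⟪y k, e j⟫_ℂ • y k), ∑ k, ⟪y k, e j⟫_ℂ • y k⟫_ℂ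
            = ∑ k, (μ k : ℂ) * (‖⟪y k, e j⟫_ℂ‖ : ℂ) ^ 2 := by
          rw [hexp]
          refine Finset.sum_congr rfl fun k _ => ?_
          rw [Finset.sum_eq_single k]
          · rw [hkey k k, if_pos rfl, ← inner_conj_symm (e j) (y k), RCLike.mul_conj]
            rfl
          · intro l _ hlk
            rw [hkey k l, if_neg (fun h => hlk h.symm), zero_mul]
          · intro hk; exact absurd (Finset.mem_univ k) hk
        rw [hinner]
        rw [Complex.re_sum]
        refine Finset.sum_congr rfl fun k _ => ?_
        rw [← Complex.ofReal_pow, ← Complex.ofReal_mul, Complex.ofReal_re]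
      rw [hwj, Finset.sum_apply]
      simp only [Pi.smul_apply, smul_eq_mul]
      rw [Fintype.sum_option, hznone, mul_zero, zero_add]
      refine (Finset.sum_congr rfl fun k _ => ?_).symm
      rw [hzsome k]
    rw [hweq]
    exact hmem
end
end

section
/- Let S ⊂ H be a subspace with 2 ≤ dim S < ∞. Then the affine hulls of D_S and of m_S are finite dimensional, and the centroid c(m_S) = (1/dim S)·Diag(P_S) is an interior point of m_S relative to the affine hull of m_S. -/
open scoped InnerProductSpace
open ContinuousLinearMap

noncomputable section

variable {H : Type*} [NormedAddCommGroup H] [InnerProductSpace ℂ H] [CompleteSpace H]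

/-- The centroid `c(m_S) = (1/dim S) · Diag(P_S)`. -/
def centroid (e : HilbertBasis ℕ ℂ H) (S : Submodule ℂ H) [FiniteDimensional ℂ S] :
    ℕ → ℝ :=
  ((Module.finrank ℂ S : ℝ))⁻¹ • diagSeq e (projOp S)

attribute [local instance] AffineSubspace.toAddTorsor

section Helper
variable {V : Type*} [AddCommGroup V] [Module ℝ V] [TopologicalSpace V]
  [IsTopologicalAddGroup V] [ContinuousSMul ℝ V] [T2Space V]

theorem mem_intrinsicInterior_of_absorbent {s : Set V} (hs : Convex ℝ s) {x : V} (hx : x ∈ s)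
    [FiniteDimensional ℝ (affineSpan ℝ s).direction]
    (habs : ∀ y ∈ s, ∃ t : ℝ, 0 < t ∧ x + t • (x - y) ∈ s) :
    x ∈ intrinsicInterior ℝ s := by
  have hxA : x ∈ affineSpan ℝ s := subset_affineSpan ℝ s hx
  haveI : Nonempty (affineSpan ℝ s) := ⟨⟨x, hxA⟩⟩
  haveI : Nonempty s := ⟨⟨x, hx⟩⟩
  set A := affineSpan ℝ s with hA
  set D := A.direction with hD
  set d := Module.finrank ℝ D with hd
  let φ : D ≃ₗ[ℝ] (Fin d → ℝ) := (Module.finBasis ℝ D).equivFun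
  have φcont : Continuous φ := φ.toLinearMap.continuous_of_finiteDimensional
  have φscont : Continuous φ.symm := φ.symm.toLinearMap.continuous_of_finiteDimensional
  let p : A := ⟨x, hxA⟩
  let aff : A ≃ᵃ[ℝ] (Fin d → ℝ) :=
    { toFun := fun q => φ ⟨(q : V) - x, A.vsub_mem_direction q.2 hxA⟩
      invFun := fun w => ⟨(φ.symm w : V) + x, by
        simpa using A.vadd_mem_of_mem_direction (φ.symm w).2 hxA⟩
      left_inv := fun q => by
        apply Subtype.ext
        simp
      right_inv := fun w => by
        simp
      linear := φ
      map_vadd' := fun q v => by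
        show φ _ = φ v + φ _
        rw [← map_add]
        congr 1
        apply Subtype.ext
        show (v : V) + (q : V) - x = (v : V) + ((q : V) - x)
        abel }
  let χ : A ≃ₜ (Fin d → ℝ) :=
    { toEquiv := aff.toEquiv
      continuous_toFun := by
        exact φcont.comp ((continuous_subtype_val.sub continuous_const).subtype_mk _)
      continuous_invFun := by
        exact ((continuous_subtype_val.comp φscont).add continuous_const).subtype_mk _ }
  set s₀ : Set A := ((↑) : A → V) ⁻¹' s with hs₀
  set s' : Set (Fin d → ℝ) := ⇑aff '' s₀ with hs'
  -- gm : the affine map realizing aff.symm followed by inclusion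
  let gm : (Fin d → ℝ) →ᵃ[ℝ] V := A.subtype.comp aff.symm.toAffineMap
  have hgm : ∀ w, gm w = (φ.symm w : V) + x := fun w => rfl
  have hs'eq : s' = gm ⁻¹' s := by
    ext w
    constructor
    · rintro ⟨q, hq, rfl⟩
      have : aff.symm (aff q) = q := aff.symm_apply_apply q
      show gm (aff q) ∈ s
      have : gm (aff q) = ((aff.symm (aff q) : A) : V) := rfl
      rw [this, aff.symm_apply_apply]
      exact hq
    · intro hw
      refine ⟨aff.symm w, ?_, aff.apply_symm_apply w⟩
      exact hw
  have hconv' : Convex ℝ s' := by rw [hs'eq]; exact hs.affine_preimage gm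
  have h0mem : (0 : Fin d → ℝ) ∈ s' := by
    refine ⟨p, hx, ?_⟩
    show φ _ = 0
    rw [show (⟨(p : V) - x, _⟩ : D) = 0 from Subtype.ext (sub_self x), map_zero]
  have habs' : ∀ w ∈ s', ∃ t : ℝ, 0 < t ∧ (-t) • w ∈ s' := by
    intro w hw
    rw [hs'eq] at hw
    obtain ⟨t, ht, hmem⟩ := habs (gm w) hw
    refine ⟨t, ht, ?_⟩
    rw [hs'eq]
    show gm ((-t) • w) ∈ s
    have : gm ((-t) • w) = x + t • (x - gm w) := by
      rw [hgm, hgm, map_smul]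
      push_cast
      module
    rw [this]
    exact hmem
  have hspan' : affineSpan ℝ s' = ⊤ := by
    have h1 : affineSpan ℝ s₀ = ⊤ := affineSpan_coe_preimage_eq_top s
    have h2 := AffineMap.span_eq_top_of_surjective (f := aff.toAffineMap) aff.surjective h1
    simpa using h2
  obtain ⟨w, hw⟩ := (hconv'.interior_nonempty_iff_affineSpan_eq_top).2 hspan'
  obtain ⟨t, ht, hmem⟩ := habs' w (interior_subset hw)
  have h0int : (0 : Fin d → ℝ) ∈ interior s' := by
    have hcombo := hconv'.combo_interior_self_mem_interior hw hmem
      (a := t / (1 + t)) (b := 1 / (1 + t))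
      (by positivity) (by positivity) (by field_simp; ring)
    have : (t / (1 + t)) • w + (1 / (1 + t)) • ((-t) • w) = 0 := by
      rw [smul_smul, ← add_smul]
      have : t / (1 + t) + 1 / (1 + t) * (-t) = 0 := by field_simp; ring
      rw [this, zero_smul]
    rwa [this] at hcombo
  -- transport back
  have himg : interior s' = ⇑χ '' interior s₀ := (χ.image_interior s₀).symm
  rw [himg] at h0int
  obtain ⟨q, hq, hq0⟩ := h0int
  have hqp : q = p := by
    apply χ.injective
    rw [hq0]
    show (0 : Fin d → ℝ) = φ _
    rw [show (⟨(p : V) - x, _⟩ : D) = 0 from Subtype.ext (sub_self x), map_zero]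
  rw [mem_intrinsicInterior]
  exact ⟨p, hqp ▸ hq, rfl⟩

end Helper

section ProjFacts

variable (S : Submodule ℂ H) [S.HasOrthogonalProjection]

lemma projOp_mem (x : H) : projOp S x ∈ S := (S.orthogonalProjectionOnto x).2

lemma projOp_symm (x y : H) : ⟪projOp S x, y⟫_ℂ = ⟪x, projOp S y⟫_ℂ :=
  S.starProjection_isSymmetric x y

lemma projOp_isSelfAdjoint : IsSelfAdjoint (projOp S) :=
  (S.starProjection_isSymmetric).isSelfAdjoint

lemma projOp_of_mem {v : H} (hv : v ∈ S) : projOp S v = v := by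
  have := Submodule.orthogonalProjectionOnto_mem_subspace_eq_self (K := S) ⟨v, hv⟩
  exact congrArg Subtype.val this

lemma projOp_idem_s8 (x : H) : projOp S (projOp S x) = projOp S x :=
  projOp_of_mem S (projOp_mem S x)

lemma projOp_inner_self (x : H) : ⟪projOp S x, x⟫_ℂ = ⟪projOp S x, projOp S x⟫_ℂ := by
  conv_lhs => rw [← projOp_idem_s8 S x]
  rw [projOp_symm S (projOp S x) x]

lemma re_inner_projOp_self (x : H) : (⟪projOp S x, x⟫_ℂ).re = ‖projOp S x‖ ^ 2 := by
  rw [projOp_inner_self]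
  exact inner_self_eq_norm_sq (𝕜 := ℂ) _

lemma projOp_isPositive : (projOp S).IsPositive := by
  refine ⟨ContinuousLinearMap.isSelfAdjoint_iff_isSymmetric.mp (projOp_isSelfAdjoint S), fun x => ?_⟩
  show (0:ℝ) ≤ (⟪projOp S x, x⟫_ℂ).re
  rw [re_inner_projOp_self]
  positivity

lemma norm_projOp_apply_le (x : H) : ‖projOp S x‖ ≤ ‖x‖ := by
  have h := re_inner_projOp_self S x
  have h2 : (⟪projOp S x, x⟫_ℂ).re ≤ ‖projOp S x‖ * ‖x‖ :=
    le_trans (RCLike.re_le_norm (K := ℂ) _) (norm_inner_le_norm _ _)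
  nlinarith [norm_nonneg (projOp S x), norm_nonneg x]

lemma projOp_isCompact [FiniteDimensional ℂ S] : IsCompactOperator (projOp S) := by
  refine ⟨((↑) : S → H) '' Metric.closedBall (0 : S) 1,
    ((isCompact_closedBall _ _).image continuous_subtype_val), ?_⟩
  apply Filter.mem_of_superset (Metric.closedBall_mem_nhds (0 : H) one_pos)
  intro x hx
  refine ⟨S.orthogonalProjectionOnto x, ?_, rfl⟩
  simp only [Metric.mem_closedBall, dist_zero_right] at hx ⊢
  calc ‖S.orthogonalProjectionOnto x‖ = ‖projOp S x‖ := rfl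
    _ ≤ ‖x‖ := norm_projOp_apply_le S x
    _ ≤ 1 := hx

end ProjFacts

section YFacts

variable {S : Submodule ℂ H} [S.HasOrthogonalProjection] {Y : H →L[ℂ] H}

lemma DY_mem (hpos : Y.IsPositive) (hYP : projOp S ∘L Y = Y) (x : H) : Y x ∈ S := by
  have : projOp S (Y x) = Y x := by
    rw [← ContinuousLinearMap.comp_apply, hYP]
  rw [← this]; exact projOp_mem S _

lemma DY_proj_apply (hpos : Y.IsPositive) (hYP : projOp S ∘L Y = Y) (x : H) :
    Y (projOp S x) = Y x := by
  have hsym := hpos.1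
  apply ext_inner_right ℂ
  intro v
  calc ⟪Y (projOp S x), v⟫_ℂ = ⟪projOp S x, Y v⟫_ℂ := hsym _ _
    _ = ⟪x, projOp S (Y v)⟫_ℂ := projOp_symm S _ _
    _ = ⟪x, Y v⟫_ℂ := by rw [projOp_of_mem S (DY_mem hpos hYP v)]
    _ = ⟪Y x, v⟫_ℂ := (hsym x v).symm

lemma DY_inner_proj (hpos : Y.IsPositive) (hYP : projOp S ∘L Y = Y) (x : H) :
    ⟪Y x, x⟫_ℂ = ⟪Y (projOp S x), projOp S x⟫_ℂ := by
  rw [DY_proj_apply hpos hYP]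
  have h1 : Y x = projOp S (Y x) := by
    rw [← ContinuousLinearMap.comp_apply, hYP]
  calc ⟪Y x, x⟫_ℂ = ⟪projOp S (Y x), x⟫_ℂ := by rw [← h1]
    _ = ⟪Y x, projOp S x⟫_ℂ := projOp_symm S (Y x) x

end YFacts

section Algebra

variable {S : Submodule ℂ H} [S.HasOrthogonalProjection]

lemma real_smul_inner_left (r : ℝ) (T : H →L[ℂ] H) (x y : H) :
    ⟪(r • T) x, y⟫_ℂ = r • ⟪T x, y⟫_ℂ := by
  rw [ContinuousLinearMap.smul_apply,
    RCLike.real_smul_eq_coe_smul (K := ℂ) r (T x), inner_smul_real_left]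

lemma real_smul_inner_right (r : ℝ) (T : H →L[ℂ] H) (x y : H) :
    ⟪x, (r • T) y⟫_ℂ = r • ⟪x, T y⟫_ℂ := by
  rw [ContinuousLinearMap.smul_apply,
    RCLike.real_smul_eq_coe_smul (K := ℂ) r (T y), inner_smul_real_right]

lemma re_comb_inner (r s : ℝ) (T U : H →L[ℂ] H) (x y : H) :
    (⟪(r • T + s • U) x, y⟫_ℂ).re = r * (⟪T x, y⟫_ℂ).re + s * (⟪U x, y⟫_ℂ).re := by
  rw [ContinuousLinearMap.add_apply, inner_add_left, Complex.add_re,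
    real_smul_inner_left, real_smul_inner_left, Complex.smul_re, Complex.smul_re]
  simp [smul_eq_mul]

lemma isSelfAdjoint_real_comb {T U : H →L[ℂ] H} (hT : IsSelfAdjoint T)
    (hU : IsSelfAdjoint U) (r s : ℝ) : IsSelfAdjoint (r • T + s • U) := by
  rw [ContinuousLinearMap.isSelfAdjoint_iff_isSymmetric] at hT hU ⊢
  intro x y
  have hT' : ∀ x y : H, ⟪T x, y⟫_ℂ = ⟪x, T y⟫_ℂ := fun x y => hT x y
  have hU' : ∀ x y : H, ⟪U x, y⟫_ℂ = ⟪x, U y⟫_ℂ := fun x y => hU x y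
  show ⟪(r • T + s • U) x, y⟫_ℂ = ⟪x, (r • T + s • U) y⟫_ℂ
  rw [ContinuousLinearMap.add_apply, ContinuousLinearMap.add_apply,
    inner_add_left, inner_add_right, real_smul_inner_left, real_smul_inner_left,
    real_smul_inner_right, real_smul_inner_right, hT' x y, hU' x y]

lemma comp_real_comb (r s : ℝ) (T U : H →L[ℂ] H) :
    projOp S ∘L (r • T + s • U) = r • (projOp S ∘L T) + s • (projOp S ∘L U) := by
  ext x
  simp only [ContinuousLinearMap.comp_apply, ContinuousLinearMap.add_apply,
    ContinuousLinearMap.smul_apply, map_add, map_smul_of_tower]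

end Algebra

section Trace

variable (e : HilbertBasis ℕ ℂ H) (S : Submodule ℂ H) [FiniteDimensional ℂ S]

lemma hasSum_absSq_basisvec (v : H) (hv : ‖v‖ = 1) :
    HasSum (fun i => ‖⟪v, e i⟫_ℂ‖ ^ 2) 1 := by
  have h := e.hasSum_inner_mul_inner v v
  have h2 := h.mapL Complex.reCLM
  have heq : (fun i => Complex.reCLM (⟪v, e i⟫_ℂ * ⟪e i, v⟫_ℂ)) =
      fun i => ‖⟪v, e i⟫_ℂ‖ ^ 2 := by
    funext i
    have : ⟪e i, v⟫_ℂ = starRingEnd ℂ ⟪v, e i⟫_ℂ := (inner_conj_symm _ _).symm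
    simp only [Complex.reCLM_apply, this, RCLike.mul_conj]
    norm_cast
  rw [heq] at h2
  have hvv : Complex.reCLM ⟪v, v⟫_ℂ = 1 := by
    simp only [Complex.reCLM_apply]
    have h3 : (⟪v, v⟫_ℂ).re = ‖v‖ ^ 2 := inner_self_eq_norm_sq (𝕜 := ℂ) v
    rw [h3, hv]; norm_num
  rwa [hvv] at h2

lemma re_diag_projOp_eq (i : ℕ) :
    (⟪projOp S (e i), e i⟫_ℂ).re =
      ∑ k, ‖⟪((stdOrthonormalBasis ℂ S k : S) : H), e i⟫_ℂ‖ ^ 2 := by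
  set b := stdOrthonormalBasis ℂ S
  rw [re_inner_projOp_self]
  have h1 : ‖projOp S (e i)‖ = ‖b.repr (S.orthogonalProjectionOnto (e i))‖ := by
    rw [b.repr.norm_map]; rfl
  have h2 : ‖b.repr (S.orthogonalProjectionOnto (e i))‖ ^ 2 =
      ∑ k, ‖b.repr (S.orthogonalProjectionOnto (e i)) k‖ ^ 2 := by
    rw [EuclideanSpace.norm_eq, Real.sq_sqrt (by positivity)]
  rw [h1, h2]
  congr 1
  funext k
  congr 1
  rw [b.repr_apply_apply]
  calc ‖⟪b k, S.orthogonalProjectionOnto (e i)⟫_ℂ‖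
      = ‖⟪((b k : S) : H), projOp S (e i)⟫_ℂ‖ := rfl
    _ = ‖⟪projOp S ((b k : S) : H), e i⟫_ℂ‖ := by rw [← projOp_symm]
    _ = ‖⟪((b k : S) : H), e i⟫_ℂ‖ := by rw [projOp_of_mem S (b k).2]

lemma hasSum_diag_projOp :
    HasSum (fun i => (⟪projOp S (e i), e i⟫_ℂ).re) ((Module.finrank ℂ S : ℝ)) := by
  have h : ∀ k : Fin (Module.finrank ℂ S),
      HasSum (fun i => ‖⟪((stdOrthonormalBasis ℂ S k : S) : H), e i⟫_ℂ‖ ^ 2) 1 := by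
    intro k
    apply hasSum_absSq_basisvec
    have := (stdOrthonormalBasis ℂ S).orthonormal.1 k
    exact this
  have htot := hasSum_sum (f := fun k i => ‖⟪((stdOrthonormalBasis ℂ S k : S) : H), e i⟫_ℂ‖ ^ 2)
    (s := Finset.univ) (fun k _ => h k)
  simp only [Finset.sum_const, Finset.card_univ, Fintype.card_fin, nsmul_eq_mul, mul_one] at htot
  have heq : (fun i => ∑ k, ‖⟪((stdOrthonormalBasis ℂ S k : S) : H), e i⟫_ℂ‖ ^ 2) =
      fun i => (⟪projOp S (e i), e i⟫_ℂ).re := by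
    funext i; rw [re_diag_projOp_eq]
  rwa [heq] at htot

end Trace

set_option maxHeartbeats 1000000 in
/-- for `2 ≤ dim S < ∞`, the affine hulls of `D_S` and of `m_S` are
finite dimensional, and the centroid `c(m_S)` is an interior point of `m_S` relative to
the affine hull of `m_S` (i.e. it belongs to the intrinsic interior of `m_S`). -/
theorem stmt_8 (e : HilbertBasis ℕ ℂ H) (S : Submodule ℂ H) [FiniteDimensional ℂ S]
    (h2 : 2 ≤ Module.finrank ℂ S) :
    FiniteDimensional ℝ (affineSpan ℝ (DOps e S)).direction ∧
    FiniteDimensional ℝ (affineSpan ℝ (momentSet e S)).direction ∧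
    centroid e S ∈ intrinsicInterior ℝ (momentSet e S) := by
  classical
  haveI : CompleteSpace S := FiniteDimensional.complete ℂ S
  haveI : FiniteDimensional ℝ S := Module.Finite.trans (R := ℝ) ℂ S
  set n : ℕ := Module.finrank ℂ S with hn
  have hn0 : (0:ℝ) < (n:ℝ) := by
    have : (2:ℝ) ≤ (n:ℝ) := by exact_mod_cast h2
    linarith
  have hnne : (n:ℝ) ≠ 0 := ne_of_gt hn0
  -- the diagonal, as an ℝ-linear map
  let Dlin : (H →L[ℂ] H) →ₗ[ℝ] (ℕ → ℝ) :=
  { toFun := diagSeq e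
    map_add' := by
      intro T U; funext i
      simp [diagSeq, ContinuousLinearMap.add_apply, inner_add_left]
    map_smul' := by
      intro r T; funext i
      simp only [diagSeq, RingHom.id_apply, Pi.smul_apply, smul_eq_mul]
      rw [real_smul_inner_left, Complex.smul_re, smul_eq_mul] }
  -- the finite-dimensional submodule of operators supported on S
  let K : Submodule ℝ (H →L[ℂ] H) :=
  { carrier := {T | (∀ x, T x ∈ S) ∧ ∀ x, T (projOp S x) = T x}
    add_mem' := by
      rintro T U ⟨hT1, hT2⟩ ⟨hU1, hU2⟩
      exact ⟨fun x => S.add_mem (hT1 x) (hU1 x), fun x => by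
        simp only [ContinuousLinearMap.add_apply, hT2 x, hU2 x]⟩
    zero_mem' := ⟨fun x => S.zero_mem, fun x => rfl⟩
    smul_mem' := by
      rintro r T ⟨hT1, hT2⟩
      exact ⟨fun x => S.smul_of_tower_mem r (hT1 x), fun x => by
        simp only [ContinuousLinearMap.smul_apply, hT2 x]⟩ }
  haveI hKfin : FiniteDimensional ℝ K := by
    let f : K →ₗ[ℝ] (S →ₗ[ℝ] S) :=
    { toFun := fun T =>
      { toFun := fun u => ⟨T.1 u, T.2.1 u⟩
        map_add' := fun u v => by
          apply Subtype.ext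
          show T.1 ((u : H) + (v : H)) = T.1 u + T.1 v
          exact map_add T.1 _ _
        map_smul' := fun r u => by
          apply Subtype.ext
          show T.1 (r • (u : H)) = r • T.1 u
          exact map_smul_of_tower T.1 r _ }
      map_add' := fun T U => by
        apply LinearMap.ext; intro u
        apply Subtype.ext
        rfl
      map_smul' := fun r T => by
        apply LinearMap.ext; intro u
        apply Subtype.ext
        rfl }
    apply FiniteDimensional.of_injective f
    intro T U hTU
    have key : ∀ u : S, T.1 (u : H) = U.1 (u : H) := by
      intro u
      have := LinearMap.congr_fun hTU u
      exact congrArg Subtype.val this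
    apply Subtype.ext
    apply ContinuousLinearMap.ext
    intro x
    calc T.1 x = T.1 (projOp S x) := (T.2.2 x).symm
      _ = U.1 (projOp S x) := key ⟨projOp S x, projOp_mem S x⟩
      _ = U.1 x := U.2.2 x
  have hDsub : DOps e S ⊆ (K : Set (H →L[ℂ] H)) := by
    rintro Y ⟨⟨hc, hpos, hsum, htr⟩, hYP⟩
    exact ⟨fun x => DY_mem hpos hYP x, fun x => DY_proj_apply hpos hYP x⟩
  have hvsD : vectorSpan ℝ (DOps e S) ≤ K := by
    rw [vectorSpan_def, Submodule.span_le]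
    rintro v ⟨a, ha, b, hb, rfl⟩
    exact K.sub_mem (hDsub ha) (hDsub hb)
  haveI hfin1 : FiniteDimensional ℝ (affineSpan ℝ (DOps e S)).direction := by
    rw [direction_affineSpan]
    exact Submodule.finiteDimensional_of_le hvsD
  have hvsM : vectorSpan ℝ (momentSet e S) ≤ K.map Dlin := by
    rw [vectorSpan_def, Submodule.span_le]
    rintro v ⟨y1, hy1, y2, hy2, rfl⟩
    obtain ⟨Y1, hY1, rfl⟩ := hy1
    obtain ⟨Y2, hY2, rfl⟩ := hy2
    refine ⟨Y1 - Y2, K.sub_mem (hDsub hY1) (hDsub hY2), ?_⟩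
    rw [map_sub]
    rfl
  haveI hfin2 : FiniteDimensional ℝ (affineSpan ℝ (momentSet e S)).direction := by
    rw [direction_affineSpan]
    exact Submodule.finiteDimensional_of_le hvsM
  -- convexity of DOps and momentSet
  have hmemDOps : ∀ (r s : ℝ) (Y Z : H →L[ℂ] H), Y ∈ DOps e S → Z ∈ DOps e S →
      (∀ x, 0 ≤ r * (⟪Y x, x⟫_ℂ).re + s * (⟪Z x, x⟫_ℂ).re) → r + s = 1 →
      r • Y + s • Z ∈ DOps e S := by
    rintro r s Y Z ⟨⟨hYc, hYp, hYs, hYt⟩, hYP⟩ ⟨⟨hZc, hZp, hZs, hZt⟩, hZP⟩ hpos hrs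
    have hdiag : (fun i => (⟪(r • Y + s • Z) (e i), e i⟫_ℂ).re)
        = fun i => r * (⟪Y (e i), e i⟫_ℂ).re + s * (⟪Z (e i), e i⟫_ℂ).re := by
      funext i; exact re_comb_inner r s Y Z (e i) (e i)
    have hYhs : HasSum (fun i => (⟪Y (e i), e i⟫_ℂ).re) 1 := by
      have := hYs.hasSum
      rwa [show ∑' i, (⟪Y (e i), e i⟫_ℂ).re = 1 from hYt] at this
    have hZhs : HasSum (fun i => (⟪Z (e i), e i⟫_ℂ).re) 1 := by
      have := hZs.hasSum
      rwa [show ∑' i, (⟪Z (e i), e i⟫_ℂ).re = 1 from hZt] at this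
    have hhs : HasSum (fun i => (⟪(r • Y + s • Z) (e i), e i⟫_ℂ).re) 1 := by
      rw [hdiag]
      have := (hYhs.mul_left r).add (hZhs.mul_left s)
      simpa [hrs] using this
    refine ⟨⟨?_, ⟨ContinuousLinearMap.isSelfAdjoint_iff_isSymmetric.mp (isSelfAdjoint_real_comb hYp.isSelfAdjoint hZp.isSelfAdjoint r s), ?_⟩, hhs.summable, hhs.tsum_eq⟩, ?_⟩
    · exact (hYc.smul r).add (hZc.smul s)
    · intro x
      show (0:ℝ) ≤ (⟪(r • Y + s • Z) x, x⟫_ℂ).re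
      rw [re_comb_inner]
      exact hpos x
    · rw [comp_real_comb, hYP, hZP]
  have hDconv : Convex ℝ (DOps e S) := by
    intro Y hY Z hZ a b ha hb hab
    refine hmemDOps a b Y Z hY hZ (fun x => ?_) hab
    have h1 : (0:ℝ) ≤ (⟪Y x, x⟫_ℂ).re := hY.1.2.1.re_inner_nonneg_left x
    have h2 : (0:ℝ) ≤ (⟪Z x, x⟫_ℂ).re := hZ.1.2.1.re_inner_nonneg_left x
    have := add_nonneg (mul_nonneg ha h1) (mul_nonneg hb h2)
    exact this
  have hMconv : Convex ℝ (momentSet e S) := by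
    have := hDconv.linear_image Dlin
    exact this
  -- the center operator
  set Y₀ : H →L[ℂ] H := (n:ℝ)⁻¹ • projOp S with hY₀
  have hPsum := hasSum_diag_projOp e S
  have hY₀diag : ∀ i, (⟪Y₀ (e i), e i⟫_ℂ).re = (n:ℝ)⁻¹ * (⟪projOp S (e i), e i⟫_ℂ).re := by
    intro i
    rw [hY₀, real_smul_inner_left, Complex.smul_re, smul_eq_mul]
  have hY₀hs : HasSum (fun i => (⟪Y₀ (e i), e i⟫_ℂ).re) 1 := by
    have := hPsum.mul_left (n:ℝ)⁻¹
    rw [inv_mul_cancel₀ hnne] at this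
    have heq : (fun i => (n:ℝ)⁻¹ * (⟪projOp S (e i), e i⟫_ℂ).re)
        = fun i => (⟪Y₀ (e i), e i⟫_ℂ).re := by
      funext i; rw [hY₀diag i]
    rwa [heq] at this
  have hY₀comp : projOp S ∘L Y₀ = Y₀ := by
    ext x
    simp only [ContinuousLinearMap.comp_apply, hY₀, ContinuousLinearMap.smul_apply,
      map_smul_of_tower]
    rw [projOp_idem_s8]
  have hY₀pos : Y₀.IsPositive := by
    constructor
    · have := isSelfAdjoint_real_comb (projOp_isSelfAdjoint S) (projOp_isSelfAdjoint S)
        ((n:ℝ)⁻¹) 0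
      simpa [hY₀] using ContinuousLinearMap.isSelfAdjoint_iff_isSymmetric.mp this
    · intro x
      show (0:ℝ) ≤ (⟪Y₀ x, x⟫_ℂ).re
      rw [hY₀, real_smul_inner_left, Complex.smul_re, smul_eq_mul, re_inner_projOp_self]
      positivity
  have hY₀mem : Y₀ ∈ DOps e S :=
    ⟨⟨(projOp_isCompact S).smul ((n:ℝ)⁻¹), hY₀pos, hY₀hs.summable, hY₀hs.tsum_eq⟩, hY₀comp⟩
  have hcentEq : diagSeq e Y₀ = centroid e S := by
    funext i
    show (⟪Y₀ (e i), e i⟫_ℂ).re = ((n:ℝ))⁻¹ • diagSeq e (projOp S) i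
    rw [hY₀diag i]
    simp [diagSeq]
  have hcmem : centroid e S ∈ momentSet e S := ⟨Y₀, hY₀mem, hcentEq⟩
  -- the absorbing property
  have habs : ∀ y ∈ momentSet e S, ∃ t : ℝ, 0 < t ∧
      centroid e S + t • (centroid e S - y) ∈ momentSet e S := by
    rintro y ⟨Y, hYD, rfl⟩
    obtain ⟨⟨hYc, hYp, hYs, hYt⟩, hYP⟩ := hYD
    obtain ⟨t, hts⟩ : ∃ t : ℝ, t = ((n:ℝ) * (‖Y‖ + 1))⁻¹ := ⟨_, rfl⟩
    have hYn : (0:ℝ) ≤ ‖Y‖ := norm_nonneg Y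
    have ht : 0 < t := by
      rw [hts]; positivity
    have htkey : t * (‖Y‖ + 1) = (n:ℝ)⁻¹ := by
      rw [hts, mul_inv]
      field_simp
    refine ⟨t, ht, ?_⟩
    have hZmem : (1 + t) • Y₀ + (-t) • Y ∈ DOps e S := by
      refine hmemDOps (1 + t) (-t) Y₀ Y hY₀mem ⟨⟨hYc, hYp, hYs, hYt⟩, hYP⟩ ?_ (by ring)
      intro x
      have hYx : (⟪Y x, x⟫_ℂ).re ≤ ‖Y‖ * ‖projOp S x‖ ^ 2 := by
        rw [DY_inner_proj hYp hYP x]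
        calc (⟪Y (projOp S x), projOp S x⟫_ℂ).re
            ≤ ‖⟪Y (projOp S x), projOp S x⟫_ℂ‖ := RCLike.re_le_norm (K := ℂ) _
          _ ≤ ‖Y (projOp S x)‖ * ‖projOp S x‖ := norm_inner_le_norm _ _
          _ ≤ (‖Y‖ * ‖projOp S x‖) * ‖projOp S x‖ :=
            mul_le_mul_of_nonneg_right (Y.le_opNorm _) (norm_nonneg _)
          _ = ‖Y‖ * ‖projOp S x‖ ^ 2 := by ring
      have hY₀x : (⟪Y₀ x, x⟫_ℂ).re = (n:ℝ)⁻¹ * ‖projOp S x‖ ^ 2 := by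
        rw [hY₀, real_smul_inner_left, Complex.smul_re, smul_eq_mul,
          re_inner_projOp_self]
      rw [hY₀x]
      have hcoef : t * ‖Y‖ ≤ (1 + t) * (n:ℝ)⁻¹ := by
        have h1 : t * ‖Y‖ ≤ t * (‖Y‖ + 1) := by nlinarith
        have h2 : (n:ℝ)⁻¹ ≤ (1 + t) * (n:ℝ)⁻¹ := by
          have : (0:ℝ) ≤ (n:ℝ)⁻¹ := by positivity
          nlinarith
        linarith [htkey ▸ h1]
      have hsq : (0:ℝ) ≤ ‖projOp S x‖ ^ 2 := by positivity
      nlinarith [hYx]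
    refine ⟨(1 + t) • Y₀ + (-t) • Y, hZmem, ?_⟩
    funext i
    have h1 : diagSeq e ((1 + t) • Y₀ + (-t) • Y) i
        = (1 + t) * (⟪Y₀ (e i), e i⟫_ℂ).re + (-t) * (⟪Y (e i), e i⟫_ℂ).re :=
      re_comb_inner _ _ _ _ _ _
    have h2 : centroid e S i = (⟪Y₀ (e i), e i⟫_ℂ).re := by rw [← hcentEq]; rfl
    show diagSeq e ((1 + t) • Y₀ + (-t) • Y) i
        = centroid e S i + t * (centroid e S i - diagSeq e Y i)
    rw [h1, h2]
    show (1 + t) * (⟪Y₀ (e i), e i⟫_ℂ).re + (-t) * (⟪Y (e i), e i⟫_ℂ).re =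
      (⟪Y₀ (e i), e i⟫_ℂ).re + t * ((⟪Y₀ (e i), e i⟫_ℂ).re - (⟪Y (e i), e i⟫_ℂ).re)
    ring
  exact ⟨hfin1, hfin2, mem_intrinsicInterior_of_absorbent hMconv hcmem habs⟩
end
end

section
/- Let S be a generic subspace of H, v^j, v^k two linearly independent principal standard vectors, and v^{j→k}(t) = cos(t)·v^j + sin(t)·e^{i·arg(v^j_k)}·(v^k − ⟨v^k, v^j⟩v^j)/‖v^k − ⟨v^k, v^j⟩v^j‖. Then for every x ∈ S with ‖x‖ = 1 there exists a unique t_x ∈ [0, π/2] such that |x_j| = |v^{j→k}_j(t_x)| and |x_k| ≤ |v^{j→k}_k(t_x)|. Moreover, if w^{jk} = e^{i·arg(v^j_k)}·(v^k − ⟨v^k,v^j⟩v^j)/‖v^k − ⟨v^k,v^j⟩v^j‖ and x = a·v^j + b·w^{jk} + c·y with y ∈ S orthogonal to both v^j and w^{jk}, then t_x = arccos(|a|). -/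
open scoped InnerProductSpace
open ContinuousLinearMap

noncomputable section

variable {H : Type*} [NormedAddCommGroup H] [InnerProductSpace ℂ H] [CompleteSpace H]

/-- The principal standard vector `v^j = P_S e_j / ‖P_S e_j‖`. -/
def pvec (e : HilbertBasis ℕ ℂ H) (S : Submodule ℂ H) [S.HasOrthogonalProjection]
    (j : ℕ) : H :=
  ‖projOp S (e j)‖⁻¹ • projOp S (e j)

/-- `w^{jk} = e^{i·arg(v^j_k)} (v^k − ⟨v^k,v^j⟩v^j)/‖v^k − ⟨v^k,v^j⟩v^j‖`. -/
def dirW (e : HilbertBasis ℕ ℂ H) (S : Submodule ℂ H) [S.HasOrthogonalProjection]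
    (j k : ℕ) : H :=
  Complex.exp (((⟪e k, pvec e S j⟫_ℂ).arg : ℂ) * Complex.I) •
    (‖pvec e S k - ⟪pvec e S j, pvec e S k⟫_ℂ • pvec e S j‖⁻¹ •
      (pvec e S k - ⟪pvec e S j, pvec e S k⟫_ℂ • pvec e S j))

/-- The curve `v^{j→k}(t) = cos(t)·v^j + sin(t)·w^{jk}`. -/
def curve (e : HilbertBasis ℕ ℂ H) (S : Submodule ℂ H) [S.HasOrthogonalProjection]
    (j k : ℕ) (t : ℝ) : H :=
  Real.cos t • pvec e S j + Real.sin t • dirW e S j k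


set_option linter.unusedSectionVars false in
/-- Auxiliary: projection lands in `S`. -/
lemma aux_projOp_mem (S : Submodule ℂ H) [S.HasOrthogonalProjection] (v : H) :
    projOp S v ∈ S := Submodule.coe_mem _

set_option linter.unusedSectionVars false in
/-- Auxiliary: real scalars act as complex scalars. -/
lemma aux_real_smul (r : ℝ) (v : H) : r • v = (r : ℂ) • v := by
  rw [← Complex.coe_algebraMap, algebraMap_smul]

set_option linter.unusedSectionVars false in
/-- Auxiliary: inner with a basis vector on `S` factors through the principal vector. -/
lemma aux_inner_basis (e : HilbertBasis ℕ ℂ H) (S : Submodule ℂ H)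
    [S.HasOrthogonalProjection] (i : ℕ) (hi : projOp S (e i) ≠ 0) {z : H} (hz : z ∈ S) :
    ⟪e i, z⟫_ℂ = (‖projOp S (e i)‖ : ℂ) * ⟪pvec e S i, z⟫_ℂ := by
  have h1 : ⟪e i - projOp S (e i), z⟫_ℂ = 0 :=
    Submodule.inner_left_of_mem_orthogonal hz (S.sub_starProjection_mem_orthogonal (e i))
  rw [inner_sub_left, sub_eq_zero] at h1
  rw [h1, pvec, aux_real_smul, inner_smul_left, Complex.conj_ofReal,
    ← mul_assoc, ← Complex.ofReal_mul, mul_inv_cancel₀ (norm_ne_zero_iff.2 hi),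
    Complex.ofReal_one, one_mul]

set_option linter.unusedSectionVars false in
lemma aux_pvec_mem (e : HilbertBasis ℕ ℂ H) (S : Submodule ℂ H)
    [S.HasOrthogonalProjection] (i : ℕ) : pvec e S i ∈ S := by
  rw [pvec, aux_real_smul]
  exact Submodule.smul_mem _ _ (aux_projOp_mem S _)

set_option linter.unusedSectionVars false in
lemma aux_pvec_norm (e : HilbertBasis ℕ ℂ H) (S : Submodule ℂ H)
    [S.HasOrthogonalProjection] (i : ℕ) (hi : projOp S (e i) ≠ 0) :
    ‖pvec e S i‖ = 1 := by
  have h0 : (0:ℝ) < ‖projOp S (e i)‖ := norm_pos_iff.2 hi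
  rw [pvec, norm_smul, Real.norm_eq_abs, abs_of_pos (inv_pos.2 h0),
    inv_mul_cancel₀ h0.ne']

set_option maxHeartbeats 2000000 in
/-- for every unit `x ∈ S` there is a unique `t_x ∈ [0,π/2]` with
`|x_j| = |v^{j→k}_j(t_x)|` and `|x_k| ≤ |v^{j→k}_k(t_x)|`; moreover if
`x = a·v^j + b·w^{jk} + c·y` with `y ∈ S` orthogonal to `v^j` and `w^{jk}`, then
`t_x = arccos |a|`. -/
theorem stmt_12 (e : HilbertBasis ℕ ℂ H) (S : Submodule ℂ H) [S.HasOrthogonalProjection]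
    (hgen : ∀ j, projOp S (e j) ≠ 0) (j k : ℕ)
    (hli : LinearIndependent ℂ ![pvec e S j, pvec e S k])
    (x : H) (hx : x ∈ S) (hx1 : ‖x‖ = 1) :
    (∃! t : ℝ, t ∈ Set.Icc 0 (Real.pi / 2) ∧
      ‖⟪e j, x⟫_ℂ‖ = ‖⟪e j, curve e S j k t⟫_ℂ‖ ∧
      ‖⟪e k, x⟫_ℂ‖ ≤ ‖⟪e k, curve e S j k t⟫_ℂ‖) ∧
    (∀ (a b c : ℂ) (y : H), y ∈ S → ⟪pvec e S j, y⟫_ℂ = 0 → ⟪dirW e S j k, y⟫_ℂ = 0 →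
      x = a • pvec e S j + b • dirW e S j k + c • y →
      ∀ t ∈ Set.Icc (0 : ℝ) (Real.pi / 2),
        (‖⟪e j, x⟫_ℂ‖ = ‖⟪e j, curve e S j k t⟫_ℂ‖ ∧
          ‖⟪e k, x⟫_ℂ‖ ≤ ‖⟪e k, curve e S j k t⟫_ℂ‖) →
        t = Real.arccos ‖a‖) := by
  classical
  have hPj := hgen j
  have hPk := hgen k
  set nj : ℝ := ‖projOp S (e j)‖ with hnjdef
  set nk : ℝ := ‖projOp S (e k)‖ with hnkdef
  have hnj0 : 0 < nj := norm_pos_iff.2 hPj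
  have hnk0 : 0 < nk := norm_pos_iff.2 hPk
  have hvjS : pvec e S j ∈ S := aux_pvec_mem e S j
  have hvkS : pvec e S k ∈ S := aux_pvec_mem e S k
  have hvj1 : ‖pvec e S j‖ = 1 := aux_pvec_norm e S j hPj
  have hvk1 : ‖pvec e S k‖ = 1 := aux_pvec_norm e S k hPk
  have hvjj : ⟪pvec e S j, pvec e S j⟫_ℂ = 1 := by
    rw [inner_self_eq_norm_sq_to_K, hvj1]; norm_num
  have hvkk : ⟪pvec e S k, pvec e S k⟫_ℂ = 1 := by
    rw [inner_self_eq_norm_sq_to_K, hvk1]; norm_num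
  set c : ℂ := ⟪pvec e S j, pvec e S k⟫_ℂ with hcdef
  set d : H := pvec e S k - c • pvec e S j with hddef
  have hc1 : ‖c‖ ≤ 1 := by
    have := norm_inner_le_norm (𝕜 := ℂ) (pvec e S j) (pvec e S k)
    rwa [hvj1, hvk1, one_mul] at this
  have hdS : d ∈ S := Submodule.sub_mem _ hvkS (Submodule.smul_mem _ _ hvjS)
  have hd0 : d ≠ 0 := by
    rw [linearIndependent_fin2] at hli
    intro h
    have hk : pvec e S k = c • pvec e S j := by
      rwa [hddef, sub_eq_zero] at h
    rcases eq_or_ne c 0 with h0 | h0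
    · exact hli.1 (by simp [Matrix.cons_val_one, Matrix.head_cons, hk, h0])
    · exact hli.2 c⁻¹ (by simp [Matrix.cons_val_one, Matrix.head_cons, hk,
        smul_smul, inv_mul_cancel₀ h0])
  set r : ℝ := ‖d‖ with hrdef
  have hr0 : 0 < r := norm_pos_iff.2 hd0
  set φ : ℂ := Complex.exp (((⟪e k, pvec e S j⟫_ℂ).arg : ℂ) * Complex.I) with hφdef
  have hφ1 : ‖φ‖ = 1 := by
    rw [hφdef, Complex.norm_exp_ofReal_mul_I]
  have hφ0 : φ ≠ 0 := by
    intro h; rw [h, norm_zero] at hφ1; norm_num at hφ1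
  have hwrfl : dirW e S j k = φ • (r⁻¹ • d) := rfl
  have hwS : dirW e S j k ∈ S := by
    rw [hwrfl, aux_real_smul r⁻¹ d]
    exact Submodule.smul_mem _ _ (Submodule.smul_mem _ _ hdS)
  have hvjd : ⟪pvec e S j, d⟫_ℂ = 0 := by
    rw [hddef, inner_sub_right, inner_smul_right, hvjj, mul_one, ← hcdef, sub_self]
  have hvjw : ⟪pvec e S j, dirW e S j k⟫_ℂ = 0 := by
    rw [hwrfl, aux_real_smul r⁻¹ d, inner_smul_right,
      inner_smul_right, hvjd, mul_zero, mul_zero]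
  have hw1 : ‖dirW e S j k‖ = 1 := by
    rw [hwrfl, norm_smul, norm_smul, hφ1, one_mul, Real.norm_eq_abs,
      abs_of_pos (inv_pos.2 hr0), ← hrdef, inv_mul_cancel₀ hr0.ne']
  have hww : ⟪dirW e S j k, dirW e S j k⟫_ℂ = 1 := by
    rw [inner_self_eq_norm_sq_to_K, hw1]; norm_num
  have hvkd : ⟪pvec e S k, d⟫_ℂ = ((1 - ‖c‖ ^ 2 : ℝ) : ℂ) := by
    rw [hddef, inner_sub_right, inner_smul_right, hvkk, ← inner_conj_symm (pvec e S k),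
      ← hcdef, Complex.mul_conj]
    push_cast [Complex.normSq_eq_norm_sq]
    ring
  set γ : ℝ := nk * (r⁻¹ * (1 - ‖c‖ ^ 2)) with hγdef
  have hγ0 : 0 ≤ γ := by
    have h1 : (0:ℝ) ≤ 1 - ‖c‖ ^ 2 := by nlinarith [norm_nonneg c]
    positivity
  have hβ : ⟪e k, dirW e S j k⟫_ℂ = φ * (γ : ℂ) := by
    rw [aux_inner_basis e S k hPk hwS, ← hnkdef, hwrfl,
      aux_real_smul r⁻¹ d, inner_smul_right, inner_smul_right, hvkd, hγdef]
    push_cast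
    ring
  set α : ℂ := ⟪e k, pvec e S j⟫_ℂ with hαdef
  obtain ⟨s, hs0, hαφ, hαn⟩ : ∃ s : ℝ, 0 ≤ s ∧ α = (s : ℂ) * φ ∧ ‖α‖ = s := by
    refine ⟨‖α‖, norm_nonneg _, ?_, rfl⟩
    rw [hφdef]
    exact (Complex.norm_mul_exp_arg_mul_I α).symm
  have hcurj : ∀ t : ℝ, ⟪e j, curve e S j k t⟫_ℂ = ((Real.cos t * nj : ℝ) : ℂ) := by
    intro t
    have hcS : curve e S j k t ∈ S := by
      rw [curve, aux_real_smul, aux_real_smul]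
      exact Submodule.add_mem _ (Submodule.smul_mem _ _ hvjS) (Submodule.smul_mem _ _ hwS)
    rw [aux_inner_basis e S j hPj hcS, ← hnjdef, curve,
      aux_real_smul (Real.cos t), aux_real_smul (Real.sin t),
      inner_add_right, inner_smul_right, inner_smul_right, hvjj, hvjw]
    push_cast
    ring
  have hcurk : ∀ t : ℝ, ⟪e k, curve e S j k t⟫_ℂ
      = φ * ((Real.cos t * s + Real.sin t * γ : ℝ) : ℂ) := by
    intro t
    rw [curve, aux_real_smul (Real.cos t), aux_real_smul (Real.sin t),
      inner_add_right, inner_smul_right, inner_smul_right, ← hαdef, hβ, hαφ]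
    push_cast
    ring
  have hncurj : ∀ t ∈ Set.Icc (0:ℝ) (Real.pi / 2),
      ‖⟪e j, curve e S j k t⟫_ℂ‖ = Real.cos t * nj := by
    intro t ht
    have hct : 0 ≤ Real.cos t := Real.cos_nonneg_of_mem_Icc
      ⟨le_trans (neg_nonpos.mpr (by positivity : (0:ℝ) ≤ Real.pi / 2)) ht.1, ht.2⟩
    rw [hcurj t, Complex.norm_real, Real.norm_eq_abs, abs_of_nonneg (by positivity)]
  have hncurk : ∀ t ∈ Set.Icc (0:ℝ) (Real.pi / 2),
      ‖⟪e k, curve e S j k t⟫_ℂ‖ = Real.cos t * s + Real.sin t * γ := by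
    intro t ht
    have hct : 0 ≤ Real.cos t := Real.cos_nonneg_of_mem_Icc
      ⟨le_trans (neg_nonpos.mpr (by positivity : (0:ℝ) ≤ Real.pi / 2)) ht.1, ht.2⟩
    have hst : 0 ≤ Real.sin t := Real.sin_nonneg_of_nonneg_of_le_pi ht.1
      (le_trans ht.2 (by linarith [Real.pi_nonneg]))
    rw [hcurk t, norm_mul, hφ1, one_mul, Complex.norm_real, Real.norm_eq_abs,
      abs_of_nonneg (by positivity)]
  -- decomposition of x
  set a₀ : ℂ := ⟪pvec e S j, x⟫_ℂ with ha₀def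
  set b₀ : ℂ := ⟪dirW e S j k, x⟫_ℂ with hb₀def
  set z : H := x - a₀ • pvec e S j - b₀ • dirW e S j k with hzdef
  have hxdecomp : x = a₀ • pvec e S j + b₀ • dirW e S j k + z := by
    rw [hzdef]; abel
  have hzS : z ∈ S := Submodule.sub_mem _ (Submodule.sub_mem _ hx
    (Submodule.smul_mem _ _ hvjS)) (Submodule.smul_mem _ _ hwS)
  have hwvj : ⟪dirW e S j k, pvec e S j⟫_ℂ = 0 := by
    rw [← inner_conj_symm, hvjw, map_zero]
  have hvjz : ⟪pvec e S j, z⟫_ℂ = 0 := by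
    rw [hzdef, inner_sub_right, inner_sub_right, inner_smul_right, inner_smul_right,
      hvjj, hvjw, ← ha₀def]
    ring
  have hwz : ⟪dirW e S j k, z⟫_ℂ = 0 := by
    rw [hzdef, inner_sub_right, inner_sub_right, inner_smul_right, inner_smul_right,
      hww, hwvj, ← hb₀def]
    ring
  have hdz : ⟪d, z⟫_ℂ = 0 := by
    have hd_eq : d = r • (φ⁻¹ • dirW e S j k) := by
      rw [hwrfl, smul_smul, inv_mul_cancel₀ hφ0, one_smul, aux_real_smul,
        aux_real_smul, smul_smul, ← Complex.ofReal_mul,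
        mul_inv_cancel₀ hr0.ne', Complex.ofReal_one, one_smul]
    rw [hd_eq, aux_real_smul, inner_smul_left, inner_smul_left, hwz]
    ring
  have hvkz : ⟪pvec e S k, z⟫_ℂ = 0 := by
    have hvk_eq : pvec e S k = d + c • pvec e S j := by rw [hddef]; abel
    rw [hvk_eq, inner_add_left, inner_smul_left, hdz, hvjz]
    ring
  have hzk : ⟪e k, z⟫_ℂ = 0 := by
    rw [aux_inner_basis e S k hPk hzS, hvkz, mul_zero]
  have hxj : ⟪e j, x⟫_ℂ = (nj : ℂ) * a₀ := by
    rw [aux_inner_basis e S j hPj hx, ← hnjdef, ha₀def]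
  have hxk : ⟪e k, x⟫_ℂ = φ * (a₀ * s + b₀ * γ) := by
    conv_lhs => rw [hxdecomp]
    rw [inner_add_right, inner_add_right, inner_smul_right, inner_smul_right,
      ← hαdef, hβ, hzk, hαφ]
    ring
  have hnxj : ‖⟪e j, x⟫_ℂ‖ = nj * ‖a₀‖ := by
    rw [hxj, norm_mul, Complex.norm_real, Real.norm_eq_abs, abs_of_pos hnj0]
  have ha₀1 : ‖a₀‖ ≤ 1 := by
    have := norm_inner_le_norm (𝕜 := ℂ) (pvec e S j) x
    rwa [hvj1, hx1, one_mul, ← ha₀def] at this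
  -- Pythagoras
  have hpyth : ‖a₀‖ ^ 2 + ‖b₀‖ ^ 2 ≤ 1 := by
    have hip1 : ⟪a₀ • pvec e S j, b₀ • dirW e S j k⟫_ℂ = 0 := by
      rw [inner_smul_left, inner_smul_right, hvjw]; ring
    have hip2 : ⟪a₀ • pvec e S j + b₀ • dirW e S j k, z⟫_ℂ = 0 := by
      rw [inner_add_left, inner_smul_left, inner_smul_left, hvjz, hwz]; ring
    have h1 : ‖a₀ • pvec e S j + b₀ • dirW e S j k‖ * ‖a₀ • pvec e S j + b₀ • dirW e S j k‖
        = ‖a₀‖ * ‖a₀‖ + ‖b₀‖ * ‖b₀‖ := by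
      have h := norm_add_sq_eq_norm_sq_add_norm_sq_of_inner_eq_zero _ _ hip1
      rwa [norm_smul, norm_smul, hvj1, hw1, mul_one, mul_one] at h
    have h2 : ‖x‖ * ‖x‖ = ‖a₀ • pvec e S j + b₀ • dirW e S j k‖ *
        ‖a₀ • pvec e S j + b₀ • dirW e S j k‖ + ‖z‖ * ‖z‖ := by
      conv_lhs => rw [hxdecomp]
      exact norm_add_sq_eq_norm_sq_add_norm_sq_of_inner_eq_zero _ _ hip2
    rw [hx1] at h2
    nlinarith [norm_nonneg z]
  -- condition j equivalence
  have hcondj : ∀ t ∈ Set.Icc (0:ℝ) (Real.pi / 2),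
      (‖⟪e j, x⟫_ℂ‖ = ‖⟪e j, curve e S j k t⟫_ℂ‖ ↔ ‖a₀‖ = Real.cos t) := by
    intro t ht
    rw [hnxj, hncurj t ht]
    constructor
    · intro h
      rw [mul_comm (Real.cos t) nj] at h
      exact mul_left_cancel₀ hnj0.ne' h
    · intro h; rw [h]; ring
  -- key bound for k
  have hkey : ∀ t ∈ Set.Icc (0:ℝ) (Real.pi / 2), ‖a₀‖ = Real.cos t →
      ‖⟪e k, x⟫_ℂ‖ ≤ ‖⟪e k, curve e S j k t⟫_ℂ‖ := by
    intro t ht hcos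
    have hst : 0 ≤ Real.sin t := Real.sin_nonneg_of_nonneg_of_le_pi ht.1
      (le_trans ht.2 (by linarith [Real.pi_nonneg]))
    have hb : ‖b₀‖ ≤ Real.sin t := by
      have h1 : ‖b₀‖ ^ 2 ≤ Real.sin t ^ 2 := by
        have h2 := Real.sin_sq_add_cos_sq t
        nlinarith [hpyth]
      exact (pow_le_pow_iff_left₀ (norm_nonneg _) hst (by norm_num)).1 h1
    rw [hxk, hncurk t ht, norm_mul, hφ1, one_mul]
    calc ‖a₀ * (s:ℂ) + b₀ * (γ:ℂ)‖ ≤ ‖a₀ * (s:ℂ)‖ + ‖b₀ * (γ:ℂ)‖ := norm_add_le _ _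
      _ = ‖a₀‖ * s + ‖b₀‖ * γ := by
          rw [norm_mul, norm_mul, Complex.norm_real, Complex.norm_real,
            Real.norm_eq_abs, Real.norm_eq_abs, abs_of_nonneg hs0, abs_of_nonneg hγ0]
      _ ≤ Real.cos t * s + Real.sin t * γ := by
          rw [← hcos]
          have := mul_le_mul_of_nonneg_right hb hγ0
          linarith
  have huniq : ∀ t ∈ Set.Icc (0:ℝ) (Real.pi / 2), ∀ t' ∈ Set.Icc (0:ℝ) (Real.pi / 2),
      Real.cos t = Real.cos t' → t = t' := by
    intro t ht t' ht' h
    have hsub : Set.Icc (0:ℝ) (Real.pi / 2) ⊆ Set.Icc 0 Real.pi := by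
      apply Set.Icc_subset_Icc le_rfl; linarith [Real.pi_nonneg]
    exact Real.injOn_cos (hsub ht) (hsub ht') h
  set t₀ : ℝ := Real.arccos ‖a₀‖ with ht₀def
  have ht₀mem : t₀ ∈ Set.Icc (0:ℝ) (Real.pi / 2) :=
    ⟨Real.arccos_nonneg _, Real.arccos_le_pi_div_two.2 (norm_nonneg _)⟩
  have ht₀cos : Real.cos t₀ = ‖a₀‖ :=
    Real.cos_arccos (le_trans (by norm_num) (norm_nonneg a₀)) ha₀1
  constructor
  · refine ⟨t₀, ⟨ht₀mem, (hcondj t₀ ht₀mem).2 ht₀cos.symm, hkey t₀ ht₀mem ht₀cos.symm⟩, ?_⟩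
    intro t' ht'
    obtain ⟨ht'mem, ht'j, -⟩ := ht'
    refine huniq t' ht'mem t₀ ht₀mem ?_
    rw [ht₀cos, ← (hcondj t' ht'mem).1 ht'j]
  · intro a b cc y hyS hyvj hyw hxeq t htmem htcond
    obtain ⟨htj, -⟩ := htcond
    have ha : a₀ = a := by
      rw [ha₀def, hxeq, inner_add_right, inner_add_right, inner_smul_right,
        inner_smul_right, inner_smul_right, hvjj, hvjw, hyvj]
      ring
    have hcost : Real.cos t = ‖a‖ := by
      rw [← ha, ← (hcondj t htmem).1 htj]
    rw [← hcost, Real.arccos_cos htmem.1 (le_trans htmem.2 (by linarith [Real.pi_nonneg]))]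
end
end
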